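/- arXiv:2310.03243 — 4 statements merged into one kernel-verified Lean document; each statement's English description precedes it below -/
import Mathlib

section
/- For every time index t ≥ 1 and every hidden layer 1 ≤ i ≤ H−1, the ℓ1-norm of the hidden state satisfies Σ_{j=1}^{L_i} |z_t^i(j)| ≤ t^i · (Π_{k=1}^{i} r_{w_k}) · (Π_{k=1}^{i} r_{v_k})^{t−1} · E^{t·i}. -/
open Finset

/-- Number of nonzero entries of a matrix. -/
noncomputable def nnz {m n : Type*} [Fintype m] [Fintype n] (A : Matrix m n ℝ) : ℕ :=
  Nat.card {p : m × n // A p.1 p.2 ≠ 0}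

/-- One time-step of the RNN: given the previous time slice `prev` of hidden states and the
current input `xt`, compute the hidden states of all layers at the current time. -/
noncomputable def zLayer (L : ℕ → ℕ)
    (w : (h : ℕ) → Matrix (Fin (L h)) (Fin (L (h - 1))) ℝ)
    (v : (h : ℕ) → Matrix (Fin (L h)) (Fin (L h)) ℝ)
    (ψ : ℕ → ℝ → ℝ)
    (prev : (h : ℕ) → Fin (L h) → ℝ) (xt : Fin (L 0) → ℝ) :
    (h : ℕ) → Fin (L h) → ℝ
  | 0 => xt
  | h + 1 => fun j =>
      ψ (h + 1) ((w (h + 1)).mulVec (zLayer L w v ψ prev xt h) j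
        + (v (h + 1)).mulVec (prev (h + 1)) j)

/-- The hidden states `hiddenState L w v ψ x t h : Fin (L h) → ℝ` of the RNN:
`hiddenState L w v ψ x t 0 = x t` for `t ≥ 1`, `hiddenState L w v ψ x 0 h = 0`, and
`hiddenState L w v ψ x t h = ψ h (w h ⬝ z_t^{h-1} + v h ⬝ z_{t-1}^h)` for `t, h ≥ 1`. -/
noncomputable def hiddenState (L : ℕ → ℕ)
    (w : (h : ℕ) → Matrix (Fin (L h)) (Fin (L (h - 1))) ℝ)
    (v : (h : ℕ) → Matrix (Fin (L h)) (Fin (L h)) ℝ)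
    (ψ : ℕ → ℝ → ℝ)
    (x : ℕ → Fin (L 0) → ℝ) : ℕ → (h : ℕ) → Fin (L h) → ℝ
  | 0 => fun _ _ => 0
  | t + 1 => zLayer L w v ψ (hiddenState L w v ψ x t) (x (t + 1))

/-- The output of the `H`-layer RNN at time `t`: `O_t = w^H z_t^{H-1}`. -/
noncomputable def output (L : ℕ → ℕ) (H : ℕ)
    (w : (h : ℕ) → Matrix (Fin (L h)) (Fin (L (h - 1))) ℝ)
    (v : (h : ℕ) → Matrix (Fin (L h)) (Fin (L h)) ℝ)
    (ψ : ℕ → ℝ → ℝ)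
    (x : ℕ → Fin (L 0) → ℝ) (t : ℕ) : Fin (L H) → ℝ :=
  (w H).mulVec (hiddenState L w v ψ x t (H - 1))

/-!
Bound the ℓ¹ norm of `z_t^i` by induction on `t` and then on `i`. Since `ψ^i` is 1-Lipschitz
and vanishes at `0`, `‖z_t^i‖₁ ≤ ‖w^i z_t^{i-1}‖₁ + ‖v^i z_{t-1}^i‖₁`, and a matrix with `r`
nonzero entries, all of size at most `E`, maps a vector with entries of size at most `M` to one
of ℓ¹ norm at most `r E M`. Bounding the entries of `z_t^{i-1}` and `z_{t-1}^i` by their ℓ¹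
norms (or by `1` for the input layer) reduces the induction step to
`r_{w_i} E B(t, i-1) + r_{v_i} E B(t-1, i) ≤ B(t, i)` for the claimed bound `B`, which comes down
to `t^(i-1) + (t-1)^i ≤ t^i`.
-/

open Matrix

lemma nnz_eq_card_filter {m n : Type*} [Fintype m] [Fintype n] (A : Matrix m n ℝ)
    [DecidablePred fun p : m × n => A p.1 p.2 ≠ 0] :
    nnz A = #{p : m × n | A p.1 p.2 ≠ 0} := by
  rw [nnz, Nat.card_eq_fintype_card, Fintype.card_subtype]

lemma sum_abs_mulVec_le_nnz_mul {m n : Type*} [Fintype m] [Fintype n] (A : Matrix m n ℝ)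
    (u : n → ℝ) {E M : ℝ} (hA : ∀ j k, |A j k| ≤ E) (hu : ∀ k, |u k| ≤ M) :
    ∑ j, |(A *ᵥ u) j| ≤ nnz A * E * M := by
  classical
  calc ∑ j, |(A *ᵥ u) j| ≤ ∑ j, ∑ k, |A j k| * |u k| := by
        gcongr with j
        calc |(A *ᵥ u) j| = |∑ k, A j k * u k| := rfl
          _ ≤ ∑ k, |A j k * u k| := abs_sum_le_sum_abs _ _
          _ = ∑ k, |A j k| * |u k| := by simp only [abs_mul]
    _ = ∑ p : m × n, |A p.1 p.2| * |u p.2| := (Fintype.sum_prod_type' _).symm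
    _ = ∑ p : m × n with A p.1 p.2 ≠ 0, |A p.1 p.2| * |u p.2| := by
        rw [sum_filter_of_ne]
        rintro p - hp h0
        simp [h0] at hp
    _ ≤ #{p : m × n | A p.1 p.2 ≠ 0} • (E * M) := by
        refine sum_le_card_nsmul _ _ _ fun p _ => ?_
        exact mul_le_mul (hA _ _) (hu _) (abs_nonneg _) ((abs_nonneg _).trans (hA p.1 p.2))
    _ = nnz A * E * M := by rw [nnz_eq_card_filter, nsmul_eq_mul, mul_assoc]

lemma abs_le_of_sum_abs_le {ι : Type*} [Fintype ι] {f : ι → ℝ} {M : ℝ}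
    (h : ∑ j, |f j| ≤ M) (k : ι) : |f k| ≤ M :=
  (single_le_sum (fun j _ => abs_nonneg (f j)) (mem_univ k)).trans h

lemma add_one_pow_add_pow_succ_le {x : ℝ} (hx : 0 ≤ x) (i : ℕ) :
    (x + 1) ^ i + x ^ (i + 1) ≤ (x + 1) ^ (i + 1) := by
  have : x ^ i ≤ (x + 1) ^ i := by gcongr; linarith
  calc (x + 1) ^ i + x ^ (i + 1) = (x + 1) ^ i + x * x ^ i := by ring
    _ ≤ (x + 1) ^ i + x * (x + 1) ^ i := by gcongr
    _ = (x + 1) ^ (i + 1) := by ring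

noncomputable def growthBound (a b : ℕ → ℝ) (E : ℝ) (t i : ℕ) : ℝ :=
  (t : ℝ) ^ i * (∏ k ∈ Icc 1 i, a k) * (∏ k ∈ Icc 1 i, b k) ^ (t - 1) * E ^ (t * i)

section growthBound

variable {a b : ℕ → ℝ} {E : ℝ}

lemma growthBound_zero_right (t : ℕ) : growthBound a b E t 0 = 1 := by
  simp [growthBound]

lemma growthBound_zero_left {i : ℕ} (hi : i ≠ 0) : growthBound a b E 0 i = 0 := by
  simp [growthBound, hi]

lemma growthBound_succ_succ_le (hE : 1 ≤ E) {i : ℕ} (ha : ∀ k ∈ Icc 1 (i + 1), 1 ≤ a k)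
    (hb : ∀ k ∈ Icc 1 (i + 1), 1 ≤ b k) (t : ℕ) :
    a (i + 1) * E * growthBound a b E (t + 1) i + b (i + 1) * E * growthBound a b E t (i + 1)
      ≤ growthBound a b E (t + 1) (i + 1) := by
  have hsub : Icc 1 i ⊆ Icc 1 (i + 1) := Icc_subset_Icc_right (by omega)
  have hP : 1 ≤ ∏ k ∈ Icc 1 i, a k := one_le_prod fun k hk => ha k (hsub hk)
  have hQ : 1 ≤ ∏ k ∈ Icc 1 i, b k := one_le_prod fun k hk => hb k (hsub hk)
  have ha' : 1 ≤ a (i + 1) := ha _ (by simp)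
  have hb' : 1 ≤ b (i + 1) := hb _ (by simp)
  set P := ∏ k ∈ Icc 1 i, a k
  set Q := ∏ k ∈ Icc 1 i, b k
  have hPa : ∏ k ∈ Icc 1 (i + 1), a k = P * a (i + 1) := prod_Icc_succ_top (by omega) _
  have hQb : ∏ k ∈ Icc 1 (i + 1), b k = Q * b (i + 1) := prod_Icc_succ_top (by omega) _
  set C := P * a (i + 1) * (Q * b (i + 1)) ^ t * E ^ ((t + 1) * (i + 1))
  have hC : growthBound a b E (t + 1) (i + 1) = ((t : ℝ) + 1) ^ (i + 1) * C := by
    simp only [growthBound, hPa, hQb, C, Nat.add_sub_cancel, Nat.cast_add, Nat.cast_one]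
    ring
  have hcur : a (i + 1) * E * growthBound a b E (t + 1) i ≤ ((t : ℝ) + 1) ^ i * C := by
    calc a (i + 1) * E * growthBound a b E (t + 1) i
        = ((t : ℝ) + 1) ^ i * (P * a (i + 1) * Q ^ t * E ^ ((t + 1) * i + 1)) := by
          simp only [growthBound, Nat.add_sub_cancel, Nat.cast_add, Nat.cast_one]
          ring
      _ ≤ ((t : ℝ) + 1) ^ i * C := by
          simp only [C]
          gcongr
          · nlinarith
          · nlinarith
  have hprev : b (i + 1) * E * growthBound a b E t (i + 1) ≤ (t : ℝ) ^ (i + 1) * C := by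
    rcases t with _ | s
    · simp [growthBound_zero_left]
    have hstep : b (i + 1) * (Q * b (i + 1)) ^ s ≤ (Q * b (i + 1)) ^ (s + 1) := by
      rw [pow_succ']
      gcongr
      nlinarith
    calc b (i + 1) * E * growthBound a b E (s + 1) (i + 1)
        = ((s : ℝ) + 1) ^ (i + 1)
            * (P * a (i + 1) * (b (i + 1) * (Q * b (i + 1)) ^ s) * E ^ ((s + 1) * (i + 1) + 1)) := by
          simp only [growthBound, hPa, hQb, Nat.add_sub_cancel, Nat.cast_add, Nat.cast_one]
          ring
      _ ≤ ((s + 1 : ℕ) : ℝ) ^ (i + 1) * C := by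
          simp only [C]
          push_cast
          gcongr
          nlinarith
  calc _ ≤ ((t : ℝ) + 1) ^ i * C + (t : ℝ) ^ (i + 1) * C := add_le_add hcur hprev
    _ ≤ ((t : ℝ) + 1) ^ (i + 1) * C := by
        rw [← add_mul]
        gcongr
        linarith [add_one_pow_add_pow_succ_le (Nat.cast_nonneg (α := ℝ) t) i]
    _ = _ := hC.symm

end growthBound

section hiddenState

variable {L : ℕ → ℕ} {w : (h : ℕ) → Matrix (Fin (L h)) (Fin (L (h - 1))) ℝ}
  {v : (h : ℕ) → Matrix (Fin (L h)) (Fin (L h)) ℝ} {ψ : ℕ → ℝ → ℝ} {x : ℕ → Fin (L 0) → ℝ}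

lemma sum_abs_hiddenState_succ_succ_le {E M M' : ℝ} {t i : ℕ}
    (hψ : ∀ y, |ψ (i + 1) y| ≤ |y|) (hw : ∀ j k, |w (i + 1) j k| ≤ E)
    (hv : ∀ j k, |v (i + 1) j k| ≤ E) (hcur : ∀ k, |hiddenState L w v ψ x (t + 1) i k| ≤ M)
    (hprev : ∀ k, |hiddenState L w v ψ x t (i + 1) k| ≤ M') :
    ∑ j, |hiddenState L w v ψ x (t + 1) (i + 1) j|
      ≤ nnz (w (i + 1)) * E * M + nnz (v (i + 1)) * E * M' :=
  calc ∑ j, |hiddenState L w v ψ x (t + 1) (i + 1) j|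
      ≤ ∑ j, (|(w (i + 1) *ᵥ hiddenState L w v ψ x (t + 1) i) j|
          + |(v (i + 1) *ᵥ hiddenState L w v ψ x t (i + 1)) j|) :=
        sum_le_sum fun j _ => (hψ _).trans (abs_add_le _ _)
    _ ≤ nnz (w (i + 1)) * E * M + nnz (v (i + 1)) * E * M' := by
        rw [sum_add_distrib]
        exact add_le_add (sum_abs_mulVec_le_nnz_mul _ _ hw hcur)
          (sum_abs_mulVec_le_nnz_mul _ _ hv hprev)

theorem sum_abs_hiddenState_le_growthBound {n : ℕ} {E : ℝ} (hE : 1 ≤ E)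
    (hψ : ∀ h, 1 ≤ h → h ≤ n → ∀ y, |ψ h y| ≤ |y|) (hx : ∀ s j, |x s j| ≤ 1)
    (hwE : ∀ h, 1 ≤ h → h ≤ n → ∀ j k, |w h j k| ≤ E)
    (hvE : ∀ h, 1 ≤ h → h ≤ n → ∀ j k, |v h j k| ≤ E)
    (hwr : ∀ h, 1 ≤ h → h ≤ n → 1 ≤ nnz (w h)) (hvr : ∀ h, 1 ≤ h → h ≤ n → 1 ≤ nnz (v h))
    (t : ℕ) {i : ℕ} (hi1 : 1 ≤ i) (hin : i ≤ n) :
    ∑ j, |hiddenState L w v ψ x t i j|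
      ≤ growthBound (fun k => nnz (w k)) (fun k => nnz (v k)) E t i := by
  induction t generalizing i with
  | zero => simp [hiddenState, growthBound_zero_left (by omega : i ≠ 0)]
  | succ t iht =>
    induction i with
    | zero => omega
    | succ i ihi =>
      have hcur : ∀ k, |hiddenState L w v ψ x (t + 1) i k|
          ≤ growthBound (fun k => nnz (w k)) (fun k => nnz (v k)) E (t + 1) i := by
        rcases Nat.eq_zero_or_pos i with rfl | hi0
        · rw [growthBound_zero_right]
          exact hx (t + 1)
        · exact abs_le_of_sum_abs_le (ihi hi0 (by omega))
      have hprev := abs_le_of_sum_abs_le (iht hi1 hin)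
      calc _ ≤ _ := sum_abs_hiddenState_succ_succ_le (hψ _ hi1 hin) (hwE _ hi1 hin)
            (hvE _ hi1 hin) hcur hprev
        _ ≤ _ := by
          refine growthBound_succ_succ_le (a := fun k => (nnz (w k) : ℝ))
            (b := fun k => (nnz (v k) : ℝ)) hE (fun k hk => ?_) (fun k hk => ?_) t <;>
            obtain ⟨hk1, hk2⟩ := mem_Icc.mp hk
          · exact_mod_cast hwr k hk1 (by omega)
          · exact_mod_cast hvr k hk1 (by omega)

end hiddenState

theorem hiddenState_l1_bound_general
    (H : ℕ)
    (L : ℕ → ℕ)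
    (w : (h : ℕ) → Matrix (Fin (L h)) (Fin (L (h - 1))) ℝ)
    (v : (h : ℕ) → Matrix (Fin (L h)) (Fin (L h)) ℝ)
    (ψ : ℕ → ℝ → ℝ)
    (hψ : ∀ h, 1 ≤ h → h ≤ H - 1 → LipschitzWith 1 (ψ h) ∧ ψ h 0 = 0)
    (x : ℕ → Fin (L 0) → ℝ) (hx : ∀ s j, |x s j| ≤ 1)
    (E : ℝ) (hE : 1 ≤ E)
    (hwE : ∀ h, 1 ≤ h → h ≤ H → ∀ j k, |w h j k| ≤ E)
    (hvE : ∀ h, 1 ≤ h → h ≤ H - 1 → ∀ j k, |v h j k| ≤ E)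
    (hwr : ∀ h, 1 ≤ h → h ≤ H → 1 ≤ nnz (w h))
    (hvr : ∀ h, 1 ≤ h → h ≤ H - 1 → 1 ≤ nnz (v h))
    (t : ℕ) (i : ℕ) (hi1 : 1 ≤ i) (hi2 : i ≤ H - 1) :
    ∑ j, |hiddenState L w v ψ x t i j| ≤
      (t : ℝ) ^ i * (∏ k ∈ Finset.Icc 1 i, (nnz (w k) : ℝ))
        * (∏ k ∈ Finset.Icc 1 i, (nnz (v k) : ℝ)) ^ (t - 1) * E ^ (t * i) := by
  have hψ_abs : ∀ h, 1 ≤ h → h ≤ H - 1 → ∀ y, |ψ h y| ≤ |y| := fun h h1 h2 y => by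
    simpa using (hψ h h1 h2).1.norm_le_mul (hψ h h1 h2).2 y
  exact sum_abs_hiddenState_le_growthBound hE hψ_abs hx
    (fun h h1 h2 => hwE h h1 (by omega)) hvE (fun h h1 h2 => hwr h h1 (by omega)) hvr t hi1 hi2

/-- Lemma S (sparse RNN hidden-state ℓ¹ bound): for every time `t ≥ 1` and hidden layer
`1 ≤ i ≤ H-1`,
`∑_j |z_t^i(j)| ≤ t^i (∏_{k=1}^i r_{w_k}) (∏_{k=1}^i r_{v_k})^{t-1} E^{t i}`. -/
theorem hiddenState_l1_bound
    (H : ℕ) (hH : 2 ≤ H)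
    (L : ℕ → ℕ) (hL : ∀ h ≤ H, 1 ≤ L h)
    (w : (h : ℕ) → Matrix (Fin (L h)) (Fin (L (h - 1))) ℝ)
    (v : (h : ℕ) → Matrix (Fin (L h)) (Fin (L h)) ℝ)
    (ψ : ℕ → ℝ → ℝ)
    (hψ : ∀ h, 1 ≤ h → h ≤ H - 1 → LipschitzWith 1 (ψ h) ∧ ψ h 0 = 0)
    (x : ℕ → Fin (L 0) → ℝ) (hx : ∀ s j, |x s j| ≤ 1)
    (E : ℝ) (hE : 1 ≤ E)
    (hwE : ∀ h, 1 ≤ h → h ≤ H → ∀ j k, |w h j k| ≤ E)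
    (hvE : ∀ h, 1 ≤ h → h ≤ H - 1 → ∀ j k, |v h j k| ≤ E)
    (hwr : ∀ h, 1 ≤ h → h ≤ H → 1 ≤ nnz (w h))
    (hvr : ∀ h, 1 ≤ h → h ≤ H - 1 → 1 ≤ nnz (v h))
    (t : ℕ) (ht : 1 ≤ t) (i : ℕ) (hi1 : 1 ≤ i) (hi2 : i ≤ H - 1) :
    ∑ j, |hiddenState L w v ψ x t i j| ≤
      (t : ℝ) ^ i * (∏ k ∈ Finset.Icc 1 i, (nnz (w k) : ℝ))
        * (∏ k ∈ Finset.Icc 1 i, (nnz (v k) : ℝ)) ^ (t - 1) * E ^ (t * i) :=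
  hiddenState_l1_bound_general H L w v ψ hψ x hx E hE hwE hvE hwr hvr t i hi1 hi2
end

section
/- Let β be a sparse RNN parameter with nnz(w^h(β)) = r_{w_h} ≥ 1 (h = 1,…,H), nnz(v^h(β)) = r_{v_h} ≥ 1 (h = 1,…,H−1), and all entries bounded in absolute value by E ≥ 1; let γ denote the set of indices of nonzero entries of β. Let β̌ be an RNN parameter whose entries vanish at every index outside γ and satisfy |β_j − β̌_j| ≤ δ₁ for every j ∈ γ, where δ₁ ≥ 0. Then for every t ≥ 1, Σ_{j=1}^{L_H} |O_t(β)(j) − O_t(β̌)(j)| ≤ t^H · H · δ₁ · (Π_{k=1}^{H} r_{w_k}) · (Π_{k=1}^{H−1} r_{v_k})^{t−1} · (E+δ₁)^{(H+1)t−2}. -/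
/-!
Put `F = E + δ₁`, which bounds the entries of both `β` and `β̌`, and let `r_h`, `s_h` be the
numbers of nonzero entries of `w^h(β)`, `v^h(β)`; `β̌` vanishes off the support of `β`. As `ψ^h` is 1-Lipschitz and vanishes at `0`, the hidden states of `β̌` are bounded by any
`b ≥ 0` with `b_t^0 ≥ 1` and `b_t^h ≥ r_h F b_t^{h-1} + s_h F b_{t-1}^h`, for instance by
`b_t^h = t^h (r_1 ⋯ r_h) Q^{t-1} F^{h+t-1}` with `Q = s_1 ⋯ s_{H-1}`.
Splitting `W z - W̌ ž = W (z - ž) + (W - W̌) ž`, the differences of hidden states satisfy the same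
recursion with a forcing term `δ₁ b`, and induction gives `F |z_t^h - ž_t^h| ≤ δ₁ (h + t - 1) b_t^h`
(the degree of `b_t^h` in `F` is `h + t - 1`). The output layer then yields
`r_H δ₁ (H + t - 1) b_t^{H-1}`, and `H + t - 1 ≤ H t`.
-/

open Finset

open Matrix

section MulVec

variable {m n : Type*} [Fintype m] [Fintype n] {A A' B : Matrix m n ℝ} {u u' : n → ℝ} {c c' : ℝ}

theorem sum_abs_mulVec_le_nnz_mul_s3 (hAB : ∀ i j, B i j = 0 → A i j = 0)
    (hc : ∀ i j, |A i j| * |u j| ≤ c) : ∑ i, |(A *ᵥ u) i| ≤ nnz B * c := by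
  classical
  set S := univ.filter fun p : m × n => B p.1 p.2 ≠ 0
  calc ∑ i, |(A *ᵥ u) i| ≤ ∑ i, ∑ j, |A i j| * |u j| := by
        gcongr with i
        simpa only [mulVec, dotProduct, abs_mul] using
          abs_sum_le_sum_abs (fun j => A i j * u j) univ
    _ = ∑ p ∈ S, |A p.1 p.2| * |u p.2| := by
        rw [← Fintype.sum_prod_type', sum_filter_of_ne]
        intro p _ hp hB
        exact hp (by simp [hAB p.1 p.2 hB])
    _ ≤ S.card • c := sum_le_card_nsmul _ _ _ fun p _ => hc p.1 p.2
    _ = nnz B * c := by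
        rw [nsmul_eq_mul, nnz, Nat.card_eq_fintype_card, Fintype.card_subtype]

theorem abs_mulVec_le_nnz_mul (hAB : ∀ i j, B i j = 0 → A i j = 0)
    (hc : ∀ i j, |A i j| * |u j| ≤ c) (i : m) : |(A *ᵥ u) i| ≤ nnz B * c :=
  (single_le_sum (fun i _ => abs_nonneg ((A *ᵥ u) i)) (mem_univ i)).trans
    (sum_abs_mulVec_le_nnz_mul_s3 hAB hc)

structure IsSparsePerturbation (A A' : Matrix m n ℝ) (F δ : ℝ) : Prop where
  support_subset : ∀ i j, A i j = 0 → A' i j = 0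
  abs_le : ∀ i j, |A i j| ≤ F
  abs_le' : ∀ i j, |A' i j| ≤ F
  abs_sub_le : ∀ i j, |A i j - A' i j| ≤ δ

variable {F δ : ℝ}

theorem IsSparsePerturbation.sum_abs_mulVec_sub_mulVec_le (hA : IsSparsePerturbation A A' F δ)
    (hu : ∀ j, F * |u j - u' j| ≤ c) (hu' : ∀ j, |u' j| ≤ c') :
    ∑ i, |(A *ᵥ u - A' *ᵥ u') i| ≤ nnz A * (c + δ * c') := by
  have hsplit : A *ᵥ u - A' *ᵥ u' = A *ᵥ (u - u') + (A - A') *ᵥ u' := by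
    rw [mulVec_sub, sub_mulVec]; abel
  have hsupp : ∀ i j, A i j = 0 → (A - A') i j = 0 := fun i j h => by
    simp [h, hA.support_subset i j h]
  have hc : ∀ i j, |A i j| * |(u - u') j| ≤ c := fun i j =>
    (mul_le_mul_of_nonneg_right (hA.abs_le i j) (abs_nonneg _)).trans (hu j)
  have hc' : ∀ i j, |(A - A') i j| * |u' j| ≤ δ * c' := fun i j =>
    mul_le_mul (hA.abs_sub_le i j) (hu' j) (abs_nonneg _) ((abs_nonneg _).trans (hA.abs_sub_le i j))
  calc ∑ i, |(A *ᵥ u - A' *ᵥ u') i|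
      ≤ ∑ i, (|(A *ᵥ (u - u')) i| + |((A - A') *ᵥ u') i|) := by
        gcongr with i
        rw [hsplit]
        exact abs_add_le _ _
    _ ≤ nnz A * c + nnz A * (δ * c') := by
        rw [sum_add_distrib]
        exact add_le_add (sum_abs_mulVec_le_nnz_mul_s3 (fun _ _ h => h) hc)
          (sum_abs_mulVec_le_nnz_mul_s3 hsupp hc')
    _ = nnz A * (c + δ * c') := (mul_add _ _ _).symm

theorem IsSparsePerturbation.abs_mulVec_sub_mulVec_le (hA : IsSparsePerturbation A A' F δ)
    (hu : ∀ j, F * |u j - u' j| ≤ c) (hu' : ∀ j, |u' j| ≤ c') (i : m) :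
    |(A *ᵥ u) i - (A' *ᵥ u') i| ≤ nnz A * (c + δ * c') :=
  (single_le_sum (fun i _ => abs_nonneg ((A *ᵥ u - A' *ᵥ u') i)) (mem_univ i)).trans
    (hA.sum_abs_mulVec_sub_mulVec_le hu hu')

end MulVec

section Lipschitz

variable {f : ℝ → ℝ}

theorem abs_sub_le_of_lipschitzWith_one (hf : LipschitzWith 1 f) (a b : ℝ) :
    |f a - f b| ≤ |a - b| := by
  simpa [Real.dist_eq] using hf.dist_le_mul a b

theorem abs_apply_add_le_of_lipschitzWith_one (hf : LipschitzWith 1 f) (h0 : f 0 = 0) (a b : ℝ) :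
    |f (a + b)| ≤ |a| + |b| := by
  have h := abs_sub_le_of_lipschitzWith_one hf (a + b) 0
  rw [h0, sub_zero, sub_zero] at h
  exact h.trans (abs_add_le a b)

theorem abs_apply_add_sub_le_of_lipschitzWith_one (hf : LipschitzWith 1 f) (a b a' b' : ℝ) :
    |f (a + b) - f (a' + b')| ≤ |a - a'| + |b - b'| := by
  refine (abs_sub_le_of_lipschitzWith_one hf _ _).trans ?_
  rw [add_sub_add_comm]
  exact abs_add_le _ _

end Lipschitz

section Recurrence

variable {L : ℕ → ℕ} {w w' : (h : ℕ) → Matrix (Fin (L h)) (Fin (L (h - 1))) ℝ}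
  {v v' : (h : ℕ) → Matrix (Fin (L h)) (Fin (L h)) ℝ} {ψ : ℕ → ℝ → ℝ} {x : ℕ → Fin (L 0) → ℝ}

@[simp]
theorem hiddenState_zero (h : ℕ) : hiddenState L w v ψ x 0 h = 0 := rfl

@[simp]
theorem hiddenState_succ_zero (t : ℕ) : hiddenState L w v ψ x (t + 1) 0 = x (t + 1) := rfl

theorem hiddenState_succ_succ (t h : ℕ) (j : Fin (L (h + 1))) :
    hiddenState L w v ψ x (t + 1) (h + 1) j =
      ψ (h + 1) ((w (h + 1) *ᵥ hiddenState L w v ψ x (t + 1) h) j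
        + (v (h + 1) *ᵥ hiddenState L w v ψ x t (h + 1)) j) := rfl

structure IsStateMajorant (r s : ℕ → ℝ) (F : ℝ) (N : ℕ) (b : ℕ → ℕ → ℝ) : Prop where
  nonneg : ∀ t h, 0 ≤ b t h
  one_le_succ_zero : ∀ t, 1 ≤ b (t + 1) 0
  le_succ_succ : ∀ t h, h < N →
    r (h + 1) * (F * b (t + 1) h) + s (h + 1) * (F * b t (h + 1)) ≤ b (t + 1) (h + 1)

variable {N : ℕ} {F δ : ℝ} {b : ℕ → ℕ → ℝ}

theorem abs_hiddenState_le (hψ : ∀ h, 1 ≤ h → h ≤ N → LipschitzWith 1 (ψ h) ∧ ψ h 0 = 0)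
    (hx : ∀ s j, |x s j| ≤ 1)
    (hw : ∀ h, 1 ≤ h → h ≤ N → ∀ j k, w h j k = 0 → w' h j k = 0)
    (hw' : ∀ h, 1 ≤ h → h ≤ N → ∀ j k, |w' h j k| ≤ F)
    (hv : ∀ h, 1 ≤ h → h ≤ N → ∀ j k, v h j k = 0 → v' h j k = 0)
    (hv' : ∀ h, 1 ≤ h → h ≤ N → ∀ j k, |v' h j k| ≤ F)
    (hb : IsStateMajorant (fun h => nnz (w h)) (fun h => nnz (v h)) F N b) :
    ∀ t h, h ≤ N → ∀ j, |hiddenState L w' v' ψ x t h j| ≤ b t h := by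
  intro t
  induction t with
  | zero => intro h _ j; simpa using hb.nonneg 0 h
  | succ t iht =>
    intro h
    induction h with
    | zero => intro _ j; simpa using (hx (t + 1) j).trans (hb.one_le_succ_zero t)
    | succ h ihh =>
      intro hh j
      obtain ⟨hlip, hψ0⟩ := hψ (h + 1) (by omega) hh
      have hprod {m n : ℕ} {A : Matrix (Fin m) (Fin n) ℝ} {u : Fin n → ℝ} {c : ℝ}
          (hA : ∀ j k, |A j k| ≤ F) (hu : ∀ k, |u k| ≤ c) : ∀ j k, |A j k| * |u k| ≤ F * c :=
        fun j k => mul_le_mul (hA j k) (hu k) (abs_nonneg _) ((abs_nonneg _).trans (hA j k))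
      calc |hiddenState L w' v' ψ x (t + 1) (h + 1) j|
          ≤ |(w' (h + 1) *ᵥ hiddenState L w' v' ψ x (t + 1) h) j|
            + |(v' (h + 1) *ᵥ hiddenState L w' v' ψ x t (h + 1)) j| := by
            rw [hiddenState_succ_succ]
            exact abs_apply_add_le_of_lipschitzWith_one hlip hψ0 _ _
        _ ≤ nnz (w (h + 1)) * (F * b (t + 1) h) + nnz (v (h + 1)) * (F * b t (h + 1)) :=
            add_le_add
              (abs_mulVec_le_nnz_mul (hw _ (by omega) hh) (hprod (hw' _ (by omega) hh)
                (ihh (by omega))) j)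
              (abs_mulVec_le_nnz_mul (hv _ (by omega) hh) (hprod (hv' _ (by omega) hh)
                (iht (h + 1) hh)) j)
        _ ≤ b (t + 1) (h + 1) := hb.le_succ_succ t h (by omega)

/- The coefficient `(h + t - 1 : ℕ)` truncates to `0` at `t = h = 0`, where both states are `0`. -/
theorem mul_abs_hiddenState_sub_le (hψ : ∀ h, 1 ≤ h → h ≤ N → LipschitzWith 1 (ψ h) ∧ ψ h 0 = 0)
    (hx : ∀ s j, |x s j| ≤ 1) (hF : 0 ≤ F) (hδ : 0 ≤ δ)
    (hw : ∀ h, 1 ≤ h → h ≤ N → IsSparsePerturbation (w h) (w' h) F δ)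
    (hv : ∀ h, 1 ≤ h → h ≤ N → IsSparsePerturbation (v h) (v' h) F δ)
    (hb : IsStateMajorant (fun h => nnz (w h)) (fun h => nnz (v h)) F N b) :
    ∀ t h, h ≤ N → ∀ j,
      F * |hiddenState L w v ψ x t h j - hiddenState L w' v' ψ x t h j|
        ≤ δ * (h + t - 1 : ℕ) * b t h := by
  have hz' := abs_hiddenState_le hψ hx (fun h h₁ h₂ => (hw h h₁ h₂).support_subset)
    (fun h h₁ h₂ => (hw h h₁ h₂).abs_le') (fun h h₁ h₂ => (hv h h₁ h₂).support_subset)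
    (fun h h₁ h₂ => (hv h h₁ h₂).abs_le') hb
  have hrhs : ∀ t h, 0 ≤ δ * (h + t - 1 : ℕ) * b t h := fun t h =>
    mul_nonneg (mul_nonneg hδ (Nat.cast_nonneg _)) (hb.nonneg t h)
  intro t
  induction t with
  | zero => intro h _ j; simpa using hrhs 0 h
  | succ t iht =>
    intro h
    induction h with
    | zero => intro _ j; simpa using hrhs (t + 1) 0
    | succ h ihh =>
      intro hh j
      obtain ⟨hlip, -⟩ := hψ (h + 1) (by omega) hh
      have hΔ₁ : ∀ k, F * |hiddenState L w v ψ x (t + 1) h k - hiddenState L w' v' ψ x (t + 1) h k|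
          ≤ δ * (h + t) * b (t + 1) h := by
        simpa [show h + (t + 1) - 1 = h + t by omega] using ihh (by omega)
      have hΔ₂ : ∀ k, F * |hiddenState L w v ψ x t (h + 1) k - hiddenState L w' v' ψ x t (h + 1) k|
          ≤ δ * (h + t) * b t (h + 1) := by
        simpa [show h + 1 + t - 1 = h + t by omega] using iht (h + 1) hh
      calc F * |hiddenState L w v ψ x (t + 1) (h + 1) j - hiddenState L w' v' ψ x (t + 1) (h + 1) j|
          ≤ F * (|(w (h + 1) *ᵥ hiddenState L w v ψ x (t + 1) h) j
                - (w' (h + 1) *ᵥ hiddenState L w' v' ψ x (t + 1) h) j|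
              + |(v (h + 1) *ᵥ hiddenState L w v ψ x t (h + 1)) j
                - (v' (h + 1) *ᵥ hiddenState L w' v' ψ x t (h + 1)) j|) := by
            rw [hiddenState_succ_succ, hiddenState_succ_succ]
            gcongr
            exact abs_apply_add_sub_le_of_lipschitzWith_one hlip _ _ _ _
        _ ≤ F * (nnz (w (h + 1)) * (δ * (h + t) * b (t + 1) h + δ * b (t + 1) h)
              + nnz (v (h + 1)) * (δ * (h + t) * b t (h + 1) + δ * b t (h + 1))) := by
            gcongr
            · exact (hw (h + 1) (by omega) hh).abs_mulVec_sub_mulVec_le hΔ₁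
                (hz' (t + 1) h (by omega)) j
            · exact (hv (h + 1) (by omega) hh).abs_mulVec_sub_mulVec_le hΔ₂
                (hz' t (h + 1) hh) j
        _ = δ * (h + t + 1) *
              (nnz (w (h + 1)) * (F * b (t + 1) h) + nnz (v (h + 1)) * (F * b t (h + 1))) := by
            ring
        _ ≤ δ * (h + t + 1) * b (t + 1) (h + 1) := by
            gcongr
            exact hb.le_succ_succ t h (by omega)
        _ = δ * (h + 1 + (t + 1) - 1 : ℕ) * b (t + 1) (h + 1) := by
            rw [show h + 1 + (t + 1) - 1 = h + t + 1 by omega]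
            push_cast
            ring

end Recurrence

section ClosedForm

variable {r s : ℕ → ℝ} {N : ℕ} {F : ℝ}

def stateBound (r s : ℕ → ℝ) (N : ℕ) (F : ℝ) (t h : ℕ) : ℝ :=
  t ^ h * (∏ k ∈ Icc 1 h, r k) * (∏ k ∈ Icc 1 N, s k) ^ (t - 1) * F ^ (h + t - 1)

theorem isStateMajorant_stateBound (hr : ∀ k, 0 ≤ r k) (hs : ∀ k ∈ Icc 1 N, 1 ≤ s k)
    (hF : 1 ≤ F) : IsStateMajorant r s F N (stateBound r s N F) := by
  have hQ : 1 ≤ ∏ k ∈ Icc 1 N, s k := one_le_prod hs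
  have hP : ∀ h, 0 ≤ ∏ k ∈ Icc 1 h, r k := fun h => prod_nonneg fun k _ => hr k
  refine ⟨fun t h => ?_, fun t => ?_, fun t h hh => ?_⟩
  · have := hP h
    unfold stateBound
    positivity
  · simpa [stateBound] using one_le_mul_of_one_le_of_one_le (one_le_pow₀ (M₀ := ℝ) hQ (n := t))
      (one_le_pow₀ hF)
  · set Q := ∏ k ∈ Icc 1 N, s k
    have hsQ : s (h + 1) * ((t : ℝ) ^ (h + 1) * Q ^ (t - 1)) ≤ t ^ (h + 1) * Q ^ t := by
      rcases t with _ | t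
      · simp
      · have hk : h + 1 ∈ Icc 1 N := mem_Icc.2 ⟨by omega, by omega⟩
        have hsh : s (h + 1) ≤ Q := by
          simpa using prod_le_prod_of_subset_of_one_le (singleton_subset_iff.2 hk)
            (by simpa using zero_le_one.trans (hs _ hk)) fun k hk _ => hs k hk
        simp only [add_tsub_cancel_right, pow_succ Q]
        have : (0 : ℝ) ≤ ((t + 1 : ℕ) : ℝ) ^ (h + 1) * Q ^ t := by positivity
        nlinarith
    have hcoef : ((t : ℝ) + 1) ^ h + (t : ℝ) ^ (h + 1) ≤ ((t : ℝ) + 1) ^ (h + 1) := by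
      have : (t : ℝ) ^ h ≤ ((t : ℝ) + 1) ^ h := by gcongr; linarith
      rw [pow_succ, pow_succ]
      nlinarith [(by positivity : (0 : ℝ) ≤ t)]
    have hK : 0 ≤ (∏ k ∈ Icc 1 h, r k) * r (h + 1) * F ^ (h + t + 1) := by
      have := hP h; have := hr (h + 1); positivity
    simp only [stateBound, show h + (t + 1) - 1 = h + t by omega,
      show h + 1 + t - 1 = h + t by omega, show h + 1 + (t + 1) - 1 = h + t + 1 by omega,
      add_tsub_cancel_right, prod_Icc_succ_top (by omega : 1 ≤ h + 1), Nat.cast_add, Nat.cast_one]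
    set K := (∏ k ∈ Icc 1 h, r k) * r (h + 1) * F ^ (h + t + 1)
    calc _ = ((t : ℝ) + 1) ^ h * Q ^ t * K + s (h + 1) * ((t : ℝ) ^ (h + 1) * Q ^ (t - 1)) * K := by
          ring
      _ ≤ ((t : ℝ) + 1) ^ h * Q ^ t * K + (t : ℝ) ^ (h + 1) * Q ^ t * K := by gcongr
      _ = (((t : ℝ) + 1) ^ h + (t : ℝ) ^ (h + 1)) * Q ^ t * K := by ring
      _ ≤ ((t : ℝ) + 1) ^ (h + 1) * Q ^ t * K := by gcongr
      _ = _ := by ring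

theorem mul_stateBound_le {H t : ℕ} {δ : ℝ} (hr : ∀ k, 0 ≤ r k)
    (hs : ∀ k ∈ Icc 1 (H - 1), 1 ≤ s k) (hF : 1 ≤ F) (hδ : 0 ≤ δ) (hH : 1 ≤ H) (ht : 1 ≤ t) :
    r H * (δ * (H - 1 + t - 1 : ℕ) * stateBound r s (H - 1) F t (H - 1)
        + δ * stateBound r s (H - 1) F t (H - 1)) ≤
      t ^ H * H * δ * (∏ k ∈ Icc 1 H, r k) * (∏ k ∈ Icc 1 (H - 1), s k) ^ (t - 1)
        * F ^ ((H + 1) * t - 2) := by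
  obtain ⟨g, rfl⟩ : ∃ g, H = g + 1 := ⟨H - 1, by omega⟩
  obtain ⟨u, rfl⟩ : ∃ u, t = u + 1 := ⟨t - 1, by omega⟩
  have hQ : 0 ≤ ∏ k ∈ Icc 1 g, s k := zero_le_one.trans (one_le_prod (by simpa using hs))
  have hP : 0 ≤ (∏ k ∈ Icc 1 g, r k) * r (g + 1) := mul_nonneg (prod_nonneg fun k _ => hr k) (hr _)
  have hcoef : ((g : ℝ) + u + 1) * ((u : ℝ) + 1) ^ g ≤ ((u : ℝ) + 1) ^ (g + 1) * (g + 1) := by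
    rw [pow_succ]
    have : (0 : ℝ) ≤ ((u : ℝ) + 1) ^ g := by positivity
    nlinarith [mul_nonneg (Nat.cast_nonneg (α := ℝ) g) (Nat.cast_nonneg (α := ℝ) u)]
  simp only [stateBound, add_tsub_cancel_right, show g + (u + 1) - 1 = g + u by omega,
    show (g + 1 + 1) * (u + 1) - 2 = g * u + g + 2 * u by ring_nf; omega,
    prod_Icc_succ_top (by omega : 1 ≤ g + 1), Nat.cast_add, Nat.cast_one]
  calc _ = (((g : ℝ) + u + 1) * ((u : ℝ) + 1) ^ g)
          * (δ * ((∏ k ∈ Icc 1 g, r k) * r (g + 1)) * (∏ k ∈ Icc 1 g, s k) ^ u) * F ^ (g + u) := by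
        ring
    _ ≤ (((u : ℝ) + 1) ^ (g + 1) * (g + 1))
          * (δ * ((∏ k ∈ Icc 1 g, r k) * r (g + 1)) * (∏ k ∈ Icc 1 g, s k) ^ u)
          * F ^ (g * u + g + 2 * u) := by
        gcongr
        · exact Nat.le_add_left g (g * u)
        · omega
    _ = _ := by ring

end ClosedForm

section Truncation

variable {m n : Type*} {A A' : Matrix m n ℝ} {E δ : ℝ}

theorem isSparsePerturbation_of_truncation (hδ : 0 ≤ δ) (hA : ∀ i j, |A i j| ≤ E)
    (hA' : ∀ i j, (A i j = 0 → A' i j = 0) ∧ (A i j ≠ 0 → |A i j - A' i j| ≤ δ)) :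
    IsSparsePerturbation A A' (E + δ) δ := by
  have hsub : ∀ i j, |A i j - A' i j| ≤ δ := fun i j => by
    by_cases h : A i j = 0
    · simpa [h, (hA' i j).1 h] using hδ
    · exact (hA' i j).2 h
  refine ⟨fun i j => (hA' i j).1, fun i j => (hA i j).trans (le_add_of_nonneg_right hδ),
    fun i j => ?_, hsub⟩
  calc |A' i j| = |A i j - (A i j - A' i j)| := by rw [sub_sub_cancel]
    _ ≤ |A i j| + |A i j - A' i j| := abs_sub _ _
    _ ≤ E + δ := add_le_add (hA i j) (hsub i j)

end Truncation

theorem output_diff_bound_truncated_general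
    (H : ℕ) (hH : 2 ≤ H)
    (L : ℕ → ℕ)
    (w w' : (h : ℕ) → Matrix (Fin (L h)) (Fin (L (h - 1))) ℝ)
    (v v' : (h : ℕ) → Matrix (Fin (L h)) (Fin (L h)) ℝ)
    (ψ : ℕ → ℝ → ℝ)
    (hψ : ∀ h, 1 ≤ h → h ≤ H - 1 → LipschitzWith 1 (ψ h) ∧ ψ h 0 = 0)
    (x : ℕ → Fin (L 0) → ℝ) (hx : ∀ s j, |x s j| ≤ 1)
    (E : ℝ) (hE : 1 ≤ E)
    (hwE : ∀ h, 1 ≤ h → h ≤ H → ∀ j k, |w h j k| ≤ E)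
    (hvE : ∀ h, 1 ≤ h → h ≤ H - 1 → ∀ j k, |v h j k| ≤ E)
    (hvr : ∀ h, 1 ≤ h → h ≤ H - 1 → 1 ≤ nnz (v h))
    (δ₁ : ℝ) (hδ₁ : 0 ≤ δ₁)
    (hwclose : ∀ h, 1 ≤ h → h ≤ H → ∀ j k,
      (w h j k = 0 → w' h j k = 0) ∧ (w h j k ≠ 0 → |w h j k - w' h j k| ≤ δ₁))
    (hvclose : ∀ h, 1 ≤ h → h ≤ H - 1 → ∀ j k,
      (v h j k = 0 → v' h j k = 0) ∧ (v h j k ≠ 0 → |v h j k - v' h j k| ≤ δ₁))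
    (t : ℕ) (ht : 1 ≤ t) :
    ∑ j, |output L H w v ψ x t j - output L H w' v' ψ x t j| ≤
      (t : ℝ) ^ H * (H : ℝ) * δ₁ * (∏ k ∈ Finset.Icc 1 H, (nnz (w k) : ℝ))
        * (∏ k ∈ Finset.Icc 1 (H - 1), (nnz (v k) : ℝ)) ^ (t - 1)
        * (E + δ₁) ^ ((H + 1) * t - 2) := by
  have hF : 1 ≤ E + δ₁ := by linarith
  have hw h h₁ h₂ := isSparsePerturbation_of_truncation hδ₁ (hwE h h₁ h₂) (hwclose h h₁ h₂)
  have hv h h₁ h₂ := isSparsePerturbation_of_truncation hδ₁ (hvE h h₁ h₂) (hvclose h h₁ h₂)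
  have hs : ∀ k ∈ Icc 1 (H - 1), (1 : ℝ) ≤ nnz (v k) := fun k hk =>
    Nat.one_le_cast.2 (hvr k (mem_Icc.1 hk).1 (mem_Icc.1 hk).2)
  set b := stateBound (fun k => (nnz (w k) : ℝ)) (fun k => (nnz (v k) : ℝ)) (H - 1) (E + δ₁)
  have hb : IsStateMajorant _ _ _ _ b :=
    isStateMajorant_stateBound (fun k => Nat.cast_nonneg (nnz (w k))) hs hF
  have hz' := abs_hiddenState_le hψ hx (fun h h₁ h₂ => (hw h h₁ (by omega)).support_subset)
    (fun h h₁ h₂ => (hw h h₁ (by omega)).abs_le') (fun h h₁ h₂ => (hv h h₁ h₂).support_subset)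
    (fun h h₁ h₂ => (hv h h₁ h₂).abs_le') hb t (H - 1) le_rfl
  have hΔ := mul_abs_hiddenState_sub_le hψ hx (by linarith) hδ₁
    (fun h h₁ h₂ => hw h h₁ (by omega)) hv hb t (H - 1) le_rfl
  calc ∑ j, |output L H w v ψ x t j - output L H w' v' ψ x t j|
      ≤ nnz (w H) * (δ₁ * (H - 1 + t - 1 : ℕ) * b t (H - 1) + δ₁ * b t (H - 1)) :=
        (hw H (by omega) le_rfl).sum_abs_mulVec_sub_mulVec_le hΔ hz'
    _ ≤ _ := mul_stateBound_le (r := fun k => (nnz (w k) : ℝ)) (fun k => Nat.cast_nonneg _) hs hF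
      hδ₁ (by omega) ht

/-- Lemma (output difference between a sparse RNN `β = (w, v)` and a truncated approximation
`β̌ = (w', v')` supported on the support `γ` of `β` with `|β_j - β̌_j| ≤ δ₁` on `γ`):
for every `t ≥ 1`,
`∑_j |O_t(β)(j) - O_t(β̌)(j)| ≤ t^H H δ₁ (∏_{k=1}^H r_{w_k}) (∏_{k=1}^{H-1} r_{v_k})^{t-1}
  (E+δ₁)^{(H+1)t-2}`. -/
theorem output_diff_bound_truncated
    (H : ℕ) (hH : 2 ≤ H)
    (L : ℕ → ℕ) (hL : ∀ h ≤ H, 1 ≤ L h)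
    (w w' : (h : ℕ) → Matrix (Fin (L h)) (Fin (L (h - 1))) ℝ)
    (v v' : (h : ℕ) → Matrix (Fin (L h)) (Fin (L h)) ℝ)
    (ψ : ℕ → ℝ → ℝ)
    (hψ : ∀ h, 1 ≤ h → h ≤ H - 1 → LipschitzWith 1 (ψ h) ∧ ψ h 0 = 0)
    (x : ℕ → Fin (L 0) → ℝ) (hx : ∀ s j, |x s j| ≤ 1)
    (E : ℝ) (hE : 1 ≤ E)
    (hwE : ∀ h, 1 ≤ h → h ≤ H → ∀ j k, |w h j k| ≤ E)
    (hvE : ∀ h, 1 ≤ h → h ≤ H - 1 → ∀ j k, |v h j k| ≤ E)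
    (hwr : ∀ h, 1 ≤ h → h ≤ H → 1 ≤ nnz (w h))
    (hvr : ∀ h, 1 ≤ h → h ≤ H - 1 → 1 ≤ nnz (v h))
    (δ₁ : ℝ) (hδ₁ : 0 ≤ δ₁)
    (hwclose : ∀ h, 1 ≤ h → h ≤ H → ∀ j k,
      (w h j k = 0 → w' h j k = 0) ∧ (w h j k ≠ 0 → |w h j k - w' h j k| ≤ δ₁))
    (hvclose : ∀ h, 1 ≤ h → h ≤ H - 1 → ∀ j k,
      (v h j k = 0 → v' h j k = 0) ∧ (v h j k ≠ 0 → |v h j k - v' h j k| ≤ δ₁))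
    (t : ℕ) (ht : 1 ≤ t) :
    ∑ j, |output L H w v ψ x t j - output L H w' v' ψ x t j| ≤
      (t : ℝ) ^ H * (H : ℝ) * δ₁ * (∏ k ∈ Finset.Icc 1 H, (nnz (w k) : ℝ))
        * (∏ k ∈ Finset.Icc 1 (H - 1), (nnz (v k) : ℝ)) ^ (t - 1)
        * (E + δ₁) ^ ((H + 1) * t - 2) :=
  output_diff_bound_truncated_general H hH L w w' v v' ψ hψ x hx E hE hwE hvE hvr δ₁ hδ₁ hwclose
    hvclose t ht
end

section
/- Let β' be a sparse RNN parameter with nnz(w^h(β')) ≤ r_{w_h} where r_{w_h} ≥ 1 (h = 1,…,H), nnz(v^h(β')) ≤ r_{v_h} where r_{v_h} ≥ 1 (h = 1,…,H−1), and all entries bounded in absolute value by E' ≥ 1. Let β̃ be any RNN parameter (same architecture) with |β'_j − β̃_j| ≤ δ₂ for every index j, where δ₂ ≥ 0. Then for every t ≥ 1, Σ_{j=1}^{L_H} |O_t(β')(j) − O_t(β̃)(j)| ≤ t^H · δ₂ · (p·L_1 + Σ_{k=1}^{H} L_k) · (Π_{k=1}^{H} [δ₂·L_k + r_{w_k}·E'])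 · (Π_{k=1}^{H−1} [δ₂·L_k + r_{v_k}·E'])^{t−1}. -/
/-!
Let `S(t,h)` be the `ℓ¹` norm of the hidden state `z_t^h` of the sparse network and `T(t,h)` the
`ℓ¹` distance between the hidden states of the two networks. The columns of `w^h` and `w̃^h` have
`ℓ¹` norm at most `c_h = δ₂ L_h + r_{w_h} E'`, those of `v^h` and `ṽ^h` at most
`d_h = δ₂ L_h + r_{v_h} E' ≤ D = ∏ d_k`, and `ψ` is 1-Lipschitz with `ψ 0 = 0`, so
  `S(t,h) ≤ c_h S(t,h-1) + d_h S(t-1,h)`,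
  `T(t,h) ≤ c_h T(t,h-1) + d_h T(t-1,h) + δ₂ L_h (S(t,h-1) + S(t-1,h))`,
except that the input enters `S(t,1)` only through `∑ |w¹_{jk}| ≤ r_{w_1} E'` (as `‖x_t‖_∞ ≤ 1`)
and `T(t,1)` only through `δ₂ L_1 ‖x_t‖₁ ≤ δ₂ L_0 L_1`. A recursion of this shape whose forcing at
layer `h` is of order `t^(h-1+e)` is solved by induction on `h` and then on `t`, since
`(t-1)^(h+e) + t^(h-1+e) ≤ t^(h+e)`. This gives `S(t,h) ≤ t^h P_h D^(t-1)` and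
`T(t,h) ≤ δ₂ N_h t^(h+1) P_h D^(t-1)` with `P_h = c_1 ⋯ c_h` and `N_h = L_0 L_1 + L_1 + ⋯ + L_h`;
the output layer `w^H` is one more such step.
-/

open Finset

open Matrix

namespace Matrix

variable {m n : Type*} [Fintype m]

theorem sum_abs_mulVec_le_sum_sum_abs_mul [Fintype n] (A : Matrix m n ℝ) (u : n → ℝ) :
    ∑ j, |(A *ᵥ u) j| ≤ ∑ j, ∑ k, |A j k| * |u k| :=
  sum_le_sum fun _ _ => (abs_sum_le_sum_abs _ _).trans_eq (by simp only [abs_mul])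

theorem sum_abs_mulVec_le_of_colSum_le [Fintype n] (A : Matrix m n ℝ) (u : n → ℝ) {C : ℝ}
    (hA : ∀ k, ∑ j, |A j k| ≤ C) : ∑ j, |(A *ᵥ u) j| ≤ C * ∑ k, |u k| :=
  calc ∑ j, |(A *ᵥ u) j| ≤ ∑ j, ∑ k, |A j k| * |u k| := A.sum_abs_mulVec_le_sum_sum_abs_mul u
    _ = ∑ k, (∑ j, |A j k|) * |u k| := by rw [sum_comm]; simp only [sum_mul]
    _ ≤ ∑ k, C * |u k| := by gcongr with k; exact hA k
    _ = C * ∑ k, |u k| := (mul_sum ..).symm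

theorem sum_abs_mulVec_le_of_abs_le_one [Fintype n] (A : Matrix m n ℝ) {u : n → ℝ}
    (hu : ∀ k, |u k| ≤ 1) :
    ∑ j, |(A *ᵥ u) j| ≤ ∑ j, ∑ k, |A j k| :=
  (A.sum_abs_mulVec_le_sum_sum_abs_mul u).trans <| by
    gcongr with j _ k; exact mul_le_of_le_one_right (abs_nonneg _) (hu k)

theorem colSum_abs_le_sum_sum_abs [Fintype n] (A : Matrix m n ℝ) (k : n) :
    ∑ j, |A j k| ≤ ∑ j, ∑ k, |A j k| :=
  sum_le_sum fun j _ => single_le_sum (f := fun k => |A j k|) (fun _ _ => abs_nonneg _) (mem_univ k)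

theorem sum_sum_abs_le_of_nnz_le [Fintype n] {A : Matrix m n ℝ} {E : ℝ} {r : ℕ}
    (hE : ∀ j k, |A j k| ≤ E) (hE0 : 0 ≤ E) (hr : nnz A ≤ r) :
    ∑ j, ∑ k, |A j k| ≤ r * E := by
  classical
  set S := univ.filter fun p : m × n => A p.1 p.2 ≠ 0
  have hS : nnz A = #S := by rw [nnz, Nat.card_eq_fintype_card, Fintype.card_subtype]
  calc ∑ j, ∑ k, |A j k| = ∑ p ∈ S, |A p.1 p.2| := by
        rw [← sum_product', univ_product_univ]
        exact (sum_filter_of_ne (p := fun p : m × n => A p.1 p.2 ≠ 0)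
          fun p _ hp h0 => hp (by simp only [h0, abs_zero])).symm
    _ ≤ #S • E := sum_le_card_nsmul _ _ _ fun p _ => hE p.1 p.2
    _ ≤ r * E := by rw [nsmul_eq_mul]; gcongr; exact_mod_cast hS ▸ hr

theorem colSum_abs_le_of_abs_sub_le {A A' : Matrix m n ℝ} {δ : ℝ}
    (h : ∀ j k, |A j k - A' j k| ≤ δ) (k : n) :
    ∑ j, |A' j k| ≤ ∑ j, |A j k| + Fintype.card m * δ :=
  calc ∑ j, |A' j k| ≤ ∑ j, (|A j k| + δ) := sum_le_sum fun j _ => by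
        linarith [h j k, abs_sub_abs_le_abs_sub (A' j k) (A j k), abs_sub_comm (A j k) (A' j k)]
    _ = ∑ j, |A j k| + Fintype.card m * δ := by
        rw [sum_add_distrib, sum_const, card_univ, nsmul_eq_mul]

theorem sum_abs_mulVec_sub_mulVec_le [Fintype n] {A A' : Matrix m n ℝ} {δ C : ℝ}
    (hδ : ∀ j k, |A j k - A' j k| ≤ δ) (hA' : ∀ k, ∑ j, |A' j k| ≤ C) (u u' : n → ℝ) :
    ∑ j, |(A *ᵥ u) j - (A' *ᵥ u') j| ≤
      Fintype.card m * δ * ∑ k, |u k| + C * ∑ k, |u k - u' k| := by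
  have hsplit : ∀ j, (A *ᵥ u) j - (A' *ᵥ u') j = ((A - A') *ᵥ u) j + (A' *ᵥ (u - u')) j := by
    intro j; simp only [sub_mulVec, mulVec_sub, Pi.sub_apply]; ring
  have hcol : ∀ k, ∑ j, |(A - A') j k| ≤ Fintype.card m * δ := fun k =>
    (sum_le_card_nsmul _ _ _ fun j _ => hδ j k).trans_eq (by rw [card_univ, nsmul_eq_mul])
  calc ∑ j, |(A *ᵥ u) j - (A' *ᵥ u') j|
      ≤ ∑ j, |((A - A') *ᵥ u) j| + ∑ j, |(A' *ᵥ (u - u')) j| := by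
        rw [← sum_add_distrib]; gcongr with j; rw [hsplit]; exact abs_add_le _ _
    _ ≤ _ := add_le_add ((A - A').sum_abs_mulVec_le_of_colSum_le u hcol)
        (A'.sum_abs_mulVec_le_of_colSum_le _ hA')

theorem colSum_abs_le_of_nnz_le_of_abs_sub_le [Fintype n] {A A' : Matrix m n ℝ} {E δ : ℝ} {r : ℕ}
    (hE : ∀ j k, |A j k| ≤ E) (hE0 : 0 ≤ E) (hr : nnz A ≤ r) (hδ0 : 0 ≤ δ)
    (hδ : ∀ j k, |A j k - A' j k| ≤ δ) (k : n) :
    ∑ j, |A j k| ≤ δ * Fintype.card m + r * E ∧ ∑ j, |A' j k| ≤ δ * Fintype.card m + r * E := by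
  have hA := (A.colSum_abs_le_sum_sum_abs k).trans (sum_sum_abs_le_of_nnz_le hE hE0 hr)
  have hA' := colSum_abs_le_of_abs_sub_le hδ k
  have hδm : 0 ≤ δ * Fintype.card m := by positivity
  constructor <;> linarith

end Matrix

theorem pow_succ_add_pow_le {x : ℝ} (hx : 0 ≤ x) (m : ℕ) :
    x ^ (m + 1) + (x + 1) ^ m ≤ (x + 1) ^ (m + 1) :=
  calc x ^ (m + 1) + (x + 1) ^ m = x ^ m * x + (x + 1) ^ m := by ring
    _ ≤ (x + 1) ^ m * x + (x + 1) ^ m := by gcongr; linarith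
    _ = (x + 1) ^ (m + 1) := by ring

theorem le_of_linear_recurrence {u : ℕ → ℝ} {a B D : ℝ} {m : ℕ} (ha : 0 ≤ a) (haD : a ≤ D)
    (hB : 0 ≤ B) (h0 : u 0 ≤ 0)
    (hstep : ∀ n : ℕ, u (n + 1) ≤ a * u n + B * (n + 1 : ℝ) ^ m * D ^ n) :
    ∀ n : ℕ, u (n + 1) ≤ B * (n + 1 : ℝ) ^ (m + 1) * D ^ n := by
  intro n
  induction n with
  | zero => simpa using (hstep 0).trans (by simpa using mul_nonpos_of_nonneg_of_nonpos ha h0)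
  | succ n ih =>
    have hD : 0 ≤ D := ha.trans haD
    calc u (n + 1 + 1) ≤ a * u (n + 1) + B * (n + 1 + 1 : ℝ) ^ m * D ^ (n + 1) := by
          exact_mod_cast hstep (n + 1)
      _ ≤ D * (B * (n + 1 : ℝ) ^ (m + 1) * D ^ n) + B * (n + 1 + 1 : ℝ) ^ m * D ^ (n + 1) := by
          refine add_le_add_left ((mul_le_mul_of_nonneg_left ih ha).trans ?_) _
          gcongr
      _ = B * D ^ (n + 1) * ((n + 1 : ℝ) ^ (m + 1) + (n + 1 + 1 : ℝ) ^ m) := by ring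
      _ ≤ B * D ^ (n + 1) * (n + 1 + 1 : ℝ) ^ (m + 1) := by
          gcongr; exact pow_succ_add_pow_le (by positivity) m
      _ = B * ((n + 1 : ℕ) + 1 : ℝ) ^ (m + 1) * D ^ (n + 1) := by push_cast; ring

theorem le_of_layered_recurrence {K e : ℕ} {c d G : ℕ → ℝ} {D : ℝ} {u : ℕ → ℕ → ℝ}
    (hc : ∀ h, 1 ≤ h → h ≤ K → 0 ≤ c h) (hd : ∀ h, 1 ≤ h → h ≤ K → 0 ≤ d h ∧ d h ≤ D)
    (hG : ∀ h, 1 ≤ h → h ≤ K → 0 ≤ G h) (h_init : ∀ h, 1 ≤ h → h ≤ K → u 0 h ≤ 0)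
    (h_first : 1 ≤ K → ∀ n : ℕ,
      u (n + 1) 1 ≤ d 1 * u n 1 + G 1 * (n + 1 : ℝ) ^ e * c 1 * D ^ n)
    (h_deep : ∀ h, 1 ≤ h → h + 1 ≤ K → ∀ n : ℕ,
      u (n + 1) (h + 1) ≤ c (h + 1) * u (n + 1) h + d (h + 1) * u n (h + 1) +
        (G (h + 1) - G h) * (n + 1 : ℝ) ^ (h + e) * (∏ k ∈ Icc 1 (h + 1), c k) * D ^ n) :
    ∀ h, 1 ≤ h → h ≤ K → ∀ n : ℕ,
      u (n + 1) h ≤ G h * (n + 1 : ℝ) ^ (h + e) * (∏ k ∈ Icc 1 h, c k) * D ^ n := by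
  have hP : ∀ h, h ≤ K → 0 ≤ ∏ k ∈ Icc 1 h, c k := fun h hK =>
    prod_nonneg fun k hk => hc k (mem_Icc.1 hk).1 ((mem_Icc.1 hk).2.trans hK)
  intro h h1
  induction h, h1 using Nat.le_induction with
  | base =>
    intro hK n
    have hd1 := hd 1 le_rfl hK
    have := le_of_linear_recurrence (u := fun n => u n 1) hd1.1 hd1.2
      (mul_nonneg (hG 1 le_rfl hK) (hc 1 le_rfl hK)) (h_init 1 le_rfl hK)
      (fun n => (h_first hK n).trans_eq (by ring)) n
    simpa [add_comm e, mul_comm, mul_left_comm, mul_assoc] using this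
  | succ h h1 ih =>
    intro hK
    have hd' := hd (h + 1) (by omega) hK
    refine fun n => (le_of_linear_recurrence (u := fun n => u n (h + 1)) (m := h + e) hd'.1 hd'.2
      (mul_nonneg (hG (h + 1) (by omega) hK) (hP (h + 1) hK)) (h_init (h + 1) (by omega) hK)
      (fun n => ?_) n).trans_eq (by rw [add_right_comm]; ring)
    calc u (n + 1) (h + 1)
        ≤ c (h + 1) * u (n + 1) h + d (h + 1) * u n (h + 1) +
          (G (h + 1) - G h) * (n + 1 : ℝ) ^ (h + e) * (∏ k ∈ Icc 1 (h + 1), c k) * D ^ n :=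
          h_deep h h1 hK n
      _ ≤ c (h + 1) * (G h * (n + 1 : ℝ) ^ (h + e) * (∏ k ∈ Icc 1 h, c k) * D ^ n) +
          d (h + 1) * u n (h + 1) +
          (G (h + 1) - G h) * (n + 1 : ℝ) ^ (h + e) * (∏ k ∈ Icc 1 (h + 1), c k) * D ^ n := by
          gcongr
          · exact hc (h + 1) (by omega) hK
          · exact ih (by omega) n
      _ = d (h + 1) * u n (h + 1) +
          G (h + 1) * (∏ k ∈ Icc 1 (h + 1), c k) * (n + 1 : ℝ) ^ (h + e) * D ^ n := by
          rw [prod_Icc_succ_top (by omega)]; ring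

section Network

variable {L : ℕ → ℕ} {w w' : (h : ℕ) → Matrix (Fin (L h)) (Fin (L (h - 1))) ℝ}
  {v v' : (h : ℕ) → Matrix (Fin (L h)) (Fin (L h)) ℝ} {ψ : ℕ → ℝ → ℝ} {x : ℕ → Fin (L 0) → ℝ}

theorem sum_abs_hiddenState_zero (h : ℕ) : ∑ j, |hiddenState L w v ψ x 0 h j| = 0 := by
  simp [hiddenState]

theorem sum_abs_hiddenState_le_of_succ {h : ℕ} (h1 : 1 ≤ h) {P D : ℝ} (hP : 0 ≤ P) (hD : 1 ≤ D)
    (hS : ∀ n : ℕ, ∑ j, |hiddenState L w v ψ x (n + 1) h j| ≤ (n + 1 : ℝ) ^ h * P * D ^ n) :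
    ∀ n : ℕ, ∑ j, |hiddenState L w v ψ x n h j| ≤ (n : ℝ) ^ h * P * D ^ n := by
  rintro (_ | n)
  · simp [sum_abs_hiddenState_zero, zero_pow (by omega : h ≠ 0)]
  · refine (hS n).trans ?_
    push_cast
    exact mul_le_mul_of_nonneg_left (pow_le_pow_right₀ hD n.le_succ) (by positivity)

theorem sum_abs_hiddenState_succ_sub_le {n h : ℕ} (hψ : LipschitzWith 1 (ψ (h + 1))) :
    ∑ j, |hiddenState L w v ψ x (n + 1) (h + 1) j - hiddenState L w' v' ψ x (n + 1) (h + 1) j| ≤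
      ∑ j, |(w (h + 1) *ᵥ hiddenState L w v ψ x (n + 1) h) j -
          (w' (h + 1) *ᵥ hiddenState L w' v' ψ x (n + 1) h) j| +
        ∑ j, |(v (h + 1) *ᵥ hiddenState L w v ψ x n (h + 1)) j -
          (v' (h + 1) *ᵥ hiddenState L w' v' ψ x n (h + 1)) j| := by
  rw [← sum_add_distrib]
  refine sum_le_sum fun j _ => ?_
  refine (show |ψ (h + 1) _ - ψ (h + 1) _| ≤ _ by
    simpa [Real.dist_eq] using hψ.dist_le_mul _ _).trans ?_
  rw [add_sub_add_comm]
  exact abs_add_le _ _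

theorem sum_abs_hiddenState_succ_le {n h : ℕ} (hψ : LipschitzWith 1 (ψ (h + 1)))
    (hψ0 : ψ (h + 1) 0 = 0) :
    ∑ j, |hiddenState L w v ψ x (n + 1) (h + 1) j| ≤
      ∑ j, |(w (h + 1) *ᵥ hiddenState L w v ψ x (n + 1) h) j| +
        ∑ j, |(v (h + 1) *ᵥ hiddenState L w v ψ x n (h + 1)) j| := by
  rw [← sum_add_distrib]
  refine sum_le_sum fun j _ => ?_
  refine (show |ψ (h + 1) _| ≤ _ by simpa [Real.dist_eq, hψ0] using hψ.dist_le_mul _ 0).trans ?_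
  exact abs_add_le _ _

theorem sum_abs_hiddenState_succ_sub_le_of_close {n h : ℕ} {δ C C' : ℝ}
    (hψ : LipschitzWith 1 (ψ (h + 1))) (hwδ : ∀ j k, |w (h + 1) j k - w' (h + 1) j k| ≤ δ)
    (hvδ : ∀ j k, |v (h + 1) j k - v' (h + 1) j k| ≤ δ) (hw' : ∀ k, ∑ j, |w' (h + 1) j k| ≤ C)
    (hv' : ∀ k, ∑ j, |v' (h + 1) j k| ≤ C') :
    ∑ j, |hiddenState L w v ψ x (n + 1) (h + 1) j - hiddenState L w' v' ψ x (n + 1) (h + 1) j| ≤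
      L (h + 1) * δ * ∑ j, |hiddenState L w v ψ x (n + 1) h j| +
          C * ∑ j, |hiddenState L w v ψ x (n + 1) h j - hiddenState L w' v' ψ x (n + 1) h j| +
        (L (h + 1) * δ * ∑ j, |hiddenState L w v ψ x n (h + 1) j| +
          C' * ∑ j, |hiddenState L w v ψ x n (h + 1) j - hiddenState L w' v' ψ x n (h + 1) j|) := by
  refine (sum_abs_hiddenState_succ_sub_le hψ).trans (add_le_add ?_ ?_)
  · exact (Matrix.sum_abs_mulVec_sub_mulVec_le hwδ hw' _ _).trans_eq (by rw [Fintype.card_fin]; rfl)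
  · exact (Matrix.sum_abs_mulVec_sub_mulVec_le hvδ hv' _ _).trans_eq (by rw [Fintype.card_fin])

theorem sum_abs_hiddenState_le {K : ℕ} {c d : ℕ → ℝ} {D : ℝ}
    (hψ : ∀ h, 1 ≤ h → h ≤ K → LipschitzWith 1 (ψ h) ∧ ψ h 0 = 0) (hx : ∀ s j, |x s j| ≤ 1)
    (hw₁ : ∑ j, ∑ k, |w 1 j k| ≤ c 1) (hw : ∀ h, 1 ≤ h → h ≤ K → ∀ k, ∑ j, |w h j k| ≤ c h)
    (hv : ∀ h, 1 ≤ h → h ≤ K → ∀ k, ∑ j, |v h j k| ≤ d h)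
    (hc : ∀ h, 1 ≤ h → h ≤ K → 0 ≤ c h) (hd : ∀ h, 1 ≤ h → h ≤ K → 0 ≤ d h ∧ d h ≤ D)
    (hD : 1 ≤ D) :
    ∀ h, 1 ≤ h → h ≤ K → ∀ n : ℕ,
      ∑ j, |hiddenState L w v ψ x (n + 1) h j| ≤
        (n + 1 : ℝ) ^ h * (∏ k ∈ Icc 1 h, c k) * D ^ n := by
  have key := le_of_layered_recurrence (u := fun n h => ∑ j, |hiddenState L w v ψ x n h j|)
    (G := 1) (e := 0) hc hd (fun _ _ _ => zero_le_one)
    (fun h _ _ => (sum_abs_hiddenState_zero h).le) ?first ?deep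
  · intro h h1 hK n
    simpa using key h h1 hK n
  case first =>
    intro hK n
    have hψ₁ := hψ 1 le_rfl hK
    calc ∑ j, |hiddenState L w v ψ x (n + 1) 1 j|
        ≤ ∑ j, |(w 1 *ᵥ x (n + 1)) j| + ∑ j, |(v 1 *ᵥ hiddenState L w v ψ x n 1) j| :=
          sum_abs_hiddenState_succ_le (h := 0) hψ₁.1 hψ₁.2
      _ ≤ c 1 + d 1 * ∑ j, |hiddenState L w v ψ x n 1 j| :=
          add_le_add (((w 1).sum_abs_mulVec_le_of_abs_le_one (hx _)).trans hw₁)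
            ((v 1).sum_abs_mulVec_le_of_colSum_le _ (hv 1 le_rfl hK))
      _ ≤ d 1 * ∑ j, |hiddenState L w v ψ x n 1 j| + 1 * (n + 1 : ℝ) ^ 0 * c 1 * D ^ n := by
          rw [add_comm]; simpa using le_mul_of_one_le_right (hc 1 le_rfl hK) (one_le_pow₀ hD)
  case deep =>
    intro h h1 hK n
    have hψh := hψ (h + 1) (by omega) hK
    calc ∑ j, |hiddenState L w v ψ x (n + 1) (h + 1) j|
        ≤ ∑ j, |(w (h + 1) *ᵥ hiddenState L w v ψ x (n + 1) h) j| +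
            ∑ j, |(v (h + 1) *ᵥ hiddenState L w v ψ x n (h + 1)) j| :=
          sum_abs_hiddenState_succ_le hψh.1 hψh.2
      _ ≤ c (h + 1) * ∑ j, |hiddenState L w v ψ x (n + 1) h j| +
            d (h + 1) * ∑ j, |hiddenState L w v ψ x n (h + 1) j| :=
          add_le_add ((w (h + 1)).sum_abs_mulVec_le_of_colSum_le _ (hw (h + 1) (by omega) hK))
            ((v (h + 1)).sum_abs_mulVec_le_of_colSum_le _ (hv (h + 1) (by omega) hK))
      _ = _ := by simp

theorem sum_abs_hiddenState_sub_le {K : ℕ} {c d : ℕ → ℝ} {D δ : ℝ}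
    (hψ : ∀ h, 1 ≤ h → h ≤ K → LipschitzWith 1 (ψ h)) (hx : ∀ s j, |x s j| ≤ 1)
    (hwδ : ∀ h, 1 ≤ h → h ≤ K → ∀ j k, |w h j k - w' h j k| ≤ δ)
    (hvδ : ∀ h, 1 ≤ h → h ≤ K → ∀ j k, |v h j k - v' h j k| ≤ δ)
    (hw' : ∀ h, 1 ≤ h → h ≤ K → ∀ k, ∑ j, |w' h j k| ≤ c h)
    (hv' : ∀ h, 1 ≤ h → h ≤ K → ∀ k, ∑ j, |v' h j k| ≤ d h)
    (hc : ∀ h, 1 ≤ h → h ≤ K → 1 ≤ c h) (hd : ∀ h, 1 ≤ h → h ≤ K → 0 ≤ d h ∧ d h ≤ D)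
    (hD : 1 ≤ D) (hδ : 0 ≤ δ)
    (hS : ∀ h, 1 ≤ h → h ≤ K → ∀ n : ℕ,
      ∑ j, |hiddenState L w v ψ x (n + 1) h j| ≤ (n + 1 : ℝ) ^ h * (∏ k ∈ Icc 1 h, c k) * D ^ n) :
    ∀ h, 1 ≤ h → h ≤ K → ∀ n : ℕ,
      ∑ j, |hiddenState L w v ψ x (n + 1) h j - hiddenState L w' v' ψ x (n + 1) h j| ≤
        δ * (L 0 * L 1 + ∑ k ∈ Icc 1 h, (L k : ℝ)) * (n + 1 : ℝ) ^ (h + 1) *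
          (∏ k ∈ Icc 1 h, c k) * D ^ n := by
  have hc₀ : ∀ h, 1 ≤ h → h ≤ K → 0 ≤ c h := fun h h1 hK => zero_le_one.trans (hc h h1 hK)
  have hP : ∀ h, h ≤ K → 1 ≤ ∏ k ∈ Icc 1 h, c k := fun h hK =>
    one_le_prod fun k hk => hc k (mem_Icc.1 hk).1 ((mem_Icc.1 hk).2.trans hK)
  have hS' := fun h h1 hK =>
    sum_abs_hiddenState_le_of_succ h1 (zero_le_one.trans (hP h hK)) hD (hS h h1 hK)
  refine le_of_layered_recurrence (u := fun n h =>
      ∑ j, |hiddenState L w v ψ x n h j - hiddenState L w' v' ψ x n h j|)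
    (G := fun h => δ * (L 0 * L 1 + ∑ k ∈ Icc 1 h, (L k : ℝ))) (e := 1) hc₀ hd
    (fun h _ _ => by positivity) (fun h _ _ => by simp [hiddenState]) ?first ?deep
  case first =>
    intro hK n
    have hx₁ : ∑ j, |x (n + 1) j| ≤ L 0 :=
      (sum_le_card_nsmul _ _ _ fun j _ => hx (n + 1) j).trans_eq (by simp)
    have hq : 1 ≤ (n + 1 : ℝ) * (c 1 * D ^ n) :=
      one_le_mul_of_one_le_of_one_le (by linarith [n.cast_nonneg (α := ℝ)])
        (one_le_mul_of_one_le_of_one_le (hc 1 le_rfl hK) (one_le_pow₀ hD))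
    have hforce : ∑ j, |x (n + 1) j| + ∑ j, |hiddenState L w v ψ x n 1 j| ≤
        (L 0 + 1) * ((n + 1) * (c 1 * D ^ n)) := by
      have h1 := hS' 1 le_rfl hK n
      simp only [Icc_self, prod_singleton, pow_one] at h1
      nlinarith [mul_le_mul_of_nonneg_left hq (L 0).cast_nonneg (α := ℝ)]
    refine (sum_abs_hiddenState_succ_sub_le_of_close (n := n) (hψ 1 le_rfl hK) (hwδ 1 le_rfl hK)
      (hvδ 1 le_rfl hK) (hw' 1 le_rfl hK) (hv' 1 le_rfl hK)).trans ?_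
    change _ * δ * ∑ j, |x (n + 1) j| + c 1 * ∑ j, |x (n + 1) j - x (n + 1) j| + _ ≤ _
    simp only [sub_self, abs_zero, sum_const_zero, mul_zero, add_zero, Icc_self, sum_singleton]
    nlinarith [mul_le_mul_of_nonneg_left hforce (by positivity : (0 : ℝ) ≤ L 1 * δ)]
  case deep =>
    intro h h1 hK n
    have hP_succ : ∏ k ∈ Icc 1 h, c k ≤ ∏ k ∈ Icc 1 (h + 1), c k := by
      rw [prod_Icc_succ_top (by omega)]
      exact le_mul_of_one_le_right (zero_le_one.trans (hP h (by omega))) (hc _ (by omega) hK)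
    have hforce : ∑ j, |hiddenState L w v ψ x (n + 1) h j| +
        ∑ j, |hiddenState L w v ψ x n (h + 1) j| ≤
        (n + 1 : ℝ) ^ (h + 1) * (∏ k ∈ Icc 1 (h + 1), c k) * D ^ n := by
      have hPD : 0 ≤ (∏ k ∈ Icc 1 (h + 1), c k) * D ^ n :=
        mul_nonneg (zero_le_one.trans (hP _ hK)) (by positivity)
      nlinarith [hS h h1 (by omega) n, hS' (h + 1) (by omega) hK n,
        mul_le_mul_of_nonneg_left hP_succ (by positivity : (0 : ℝ) ≤ (n + 1) ^ h * D ^ n),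
        mul_le_mul_of_nonneg_right (pow_succ_add_pow_le n.cast_nonneg h) hPD]
    have hG : δ * (L 0 * L 1 + ∑ k ∈ Icc 1 (h + 1), (L k : ℝ)) -
        δ * (L 0 * L 1 + ∑ k ∈ Icc 1 h, (L k : ℝ)) = L (h + 1) * δ := by
      rw [sum_Icc_succ_top (by omega)]; ring
    have hstep := sum_abs_hiddenState_succ_sub_le_of_close (x := x) (n := n)
      (hψ (h + 1) (by omega) hK) (hwδ (h + 1) (by omega) hK) (hvδ (h + 1) (by omega) hK)
      (hw' (h + 1) (by omega) hK) (hv' (h + 1) (by omega) hK)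
    rw [hG]
    nlinarith [hstep, mul_le_mul_of_nonneg_left hforce (by positivity : (0 : ℝ) ≤ L (h + 1) * δ)]

theorem sum_abs_output_sub_le {H : ℕ} (hH : 2 ≤ H) {c d : ℕ → ℝ} {D δ : ℝ}
    (hψ : ∀ h, 1 ≤ h → h ≤ H - 1 → LipschitzWith 1 (ψ h) ∧ ψ h 0 = 0) (hx : ∀ s j, |x s j| ≤ 1)
    (hw₁ : ∑ j, ∑ k, |w 1 j k| ≤ c 1) (hw : ∀ h, 1 ≤ h → h ≤ H - 1 → ∀ k, ∑ j, |w h j k| ≤ c h)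
    (hv : ∀ h, 1 ≤ h → h ≤ H - 1 → ∀ k, ∑ j, |v h j k| ≤ d h)
    (hwδ : ∀ h, 1 ≤ h → h ≤ H → ∀ j k, |w h j k - w' h j k| ≤ δ)
    (hvδ : ∀ h, 1 ≤ h → h ≤ H - 1 → ∀ j k, |v h j k - v' h j k| ≤ δ)
    (hw' : ∀ h, 1 ≤ h → h ≤ H → ∀ k, ∑ j, |w' h j k| ≤ c h)
    (hv' : ∀ h, 1 ≤ h → h ≤ H - 1 → ∀ k, ∑ j, |v' h j k| ≤ d h)
    (hc : ∀ h, 1 ≤ h → h ≤ H → 1 ≤ c h) (hd : ∀ h, 1 ≤ h → h ≤ H - 1 → 0 ≤ d h ∧ d h ≤ D)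
    (hD : 1 ≤ D) (hδ : 0 ≤ δ) {t : ℕ} (ht : 1 ≤ t) :
    ∑ j, |output L H w v ψ x t j - output L H w' v' ψ x t j| ≤
      (t : ℝ) ^ H * δ * (L 0 * L 1 + ∑ k ∈ Icc 1 H, (L k : ℝ)) * (∏ k ∈ Icc 1 H, c k) *
        D ^ (t - 1) := by
  obtain ⟨n, rfl⟩ : ∃ n, t = n + 1 := ⟨t - 1, by omega⟩
  obtain ⟨K, rfl⟩ : ∃ K, H = K + 1 := ⟨H - 1, by omega⟩
  simp only [Nat.add_sub_cancel] at *
  have hS := sum_abs_hiddenState_le hψ hx hw₁ hw hv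
    (fun h h1 hK => zero_le_one.trans (hc h h1 (by omega))) hd hD
  have hT := sum_abs_hiddenState_sub_le (fun h h1 hK => (hψ h h1 hK).1) hx
    (fun h h1 hK => hwδ h h1 (by omega)) hvδ (fun h h1 hK => hw' h h1 (by omega)) hv'
    (fun h h1 hK => hc h h1 (by omega)) hd hD hδ hS K (by omega) le_rfl n
  have hout := Matrix.sum_abs_mulVec_sub_mulVec_le (hwδ (K + 1) (by omega) le_rfl)
    (hw' (K + 1) (by omega) le_rfl) (hiddenState L w v ψ x (n + 1) K)
    (hiddenState L w' v' ψ x (n + 1) K)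
  simp only [Fintype.card_fin] at hout
  specialize hS K (by omega) le_rfl n
  have hP : 0 ≤ ∏ k ∈ Icc 1 K, c k :=
    prod_nonneg fun k hk => zero_le_one.trans (hc k (mem_Icc.1 hk).1 (by grind))
  rw [prod_Icc_succ_top (by omega), sum_Icc_succ_top (by omega)]
  have hcK := hc (K + 1) (by omega) le_rfl
  have hgrowth : 1 ≤ (n + 1 : ℝ) * c (K + 1) :=
    one_le_mul_of_one_le_of_one_le (by linarith [n.cast_nonneg (α := ℝ)]) hcK
  calc _ ≤ L (K + 1) * δ * ∑ k, |hiddenState L w v ψ x (n + 1) K k| +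
        c (K + 1) *
          ∑ k, |hiddenState L w v ψ x (n + 1) K k - hiddenState L w' v' ψ x (n + 1) K k| :=
        hout
    _ ≤ L (K + 1) * δ * ((n + 1 : ℝ) ^ K * (∏ k ∈ Icc 1 K, c k) * D ^ n * ((n + 1) * c (K + 1))) +
        c (K + 1) * (δ * (L 0 * L 1 + ∑ k ∈ Icc 1 K, (L k : ℝ)) * (n + 1 : ℝ) ^ (K + 1) *
          (∏ k ∈ Icc 1 K, c k) * D ^ n) := by
        gcongr
        exact hS.trans (le_mul_of_one_le_right (by positivity) hgrowth)
    _ = _ := by push_cast; ring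

end Network

theorem output_diff_bound_dense_perturbation_general
    (H : ℕ) (hH : 2 ≤ H)
    (L : ℕ → ℕ)
    (w w' : (h : ℕ) → Matrix (Fin (L h)) (Fin (L (h - 1))) ℝ)
    (v v' : (h : ℕ) → Matrix (Fin (L h)) (Fin (L h)) ℝ)
    (ψ : ℕ → ℝ → ℝ)
    (hψ : ∀ h, 1 ≤ h → h ≤ H - 1 → LipschitzWith 1 (ψ h) ∧ ψ h 0 = 0)
    (x : ℕ → Fin (L 0) → ℝ) (hx : ∀ s j, |x s j| ≤ 1)
    (E' : ℝ) (hE' : 1 ≤ E')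
    (rw rv : ℕ → ℕ)
    (hrw : ∀ h, 1 ≤ h → h ≤ H → 1 ≤ rw h) (hrv : ∀ h, 1 ≤ h → h ≤ H - 1 → 1 ≤ rv h)
    (hwE : ∀ h, 1 ≤ h → h ≤ H → ∀ j k, |w h j k| ≤ E')
    (hvE : ∀ h, 1 ≤ h → h ≤ H - 1 → ∀ j k, |v h j k| ≤ E')
    (hwr : ∀ h, 1 ≤ h → h ≤ H → nnz (w h) ≤ rw h)
    (hvr : ∀ h, 1 ≤ h → h ≤ H - 1 → nnz (v h) ≤ rv h)
    (δ₂ : ℝ) (hδ₂ : 0 ≤ δ₂)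
    (hwclose : ∀ h, 1 ≤ h → h ≤ H → ∀ j k, |w h j k - w' h j k| ≤ δ₂)
    (hvclose : ∀ h, 1 ≤ h → h ≤ H - 1 → ∀ j k, |v h j k - v' h j k| ≤ δ₂)
    (t : ℕ) (ht : 1 ≤ t) :
    ∑ j, |output L H w v ψ x t j - output L H w' v' ψ x t j| ≤
      (t : ℝ) ^ H * δ₂ * ((L 0 : ℝ) * (L 1 : ℝ) + ∑ k ∈ Finset.Icc 1 H, (L k : ℝ))
        * (∏ k ∈ Finset.Icc 1 H, (δ₂ * (L k : ℝ) + (rw k : ℝ) * E'))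
        * (∏ k ∈ Finset.Icc 1 (H - 1), (δ₂ * (L k : ℝ) + (rv k : ℝ) * E')) ^ (t - 1) := by
  have hE₀ : 0 ≤ E' := zero_le_one.trans hE'
  have hone : ∀ a r : ℕ, 1 ≤ r → 1 ≤ δ₂ * a + r * E' := fun a r hr => by
    nlinarith [(Nat.one_le_cast (α := ℝ)).2 hr, mul_nonneg hδ₂ (a.cast_nonneg (α := ℝ))]
  have hw := fun h h1 h2 => Matrix.colSum_abs_le_of_nnz_le_of_abs_sub_le (hwE h h1 h2) hE₀
    (hwr h h1 h2) hδ₂ (hwclose h h1 h2)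
  have hv := fun h h1 h2 => Matrix.colSum_abs_le_of_nnz_le_of_abs_sub_le (hvE h h1 h2) hE₀
    (hvr h h1 h2) hδ₂ (hvclose h h1 h2)
  simp only [Fintype.card_fin] at hw hv
  have hd : ∀ k ∈ Icc 1 (H - 1), 1 ≤ δ₂ * L k + rv k * E' := fun k hk =>
    hone _ _ (hrv k (mem_Icc.1 hk).1 (mem_Icc.1 hk).2)
  refine sum_abs_output_sub_le hH hψ hx ?_ (fun h h1 h2 k => (hw h h1 (by omega) k).1)
    (fun h h1 h2 k => (hv h h1 h2 k).1) hwclose hvclose (fun h h1 h2 k => (hw h h1 h2 k).2)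
    (fun h h1 h2 k => (hv h h1 h2 k).2) (fun h h1 h2 => hone _ _ (hrw h h1 h2))
    (fun h h1 h2 => ⟨zero_le_one.trans (hd h (mem_Icc.2 ⟨h1, h2⟩)), ?_⟩) (one_le_prod hd) hδ₂ ht
  · exact (Matrix.sum_sum_abs_le_of_nnz_le (hwE 1 le_rfl (by omega)) hE₀
      (hwr 1 le_rfl (by omega))).trans (le_add_of_nonneg_left (by positivity))
  · rw [← prod_singleton (fun k => δ₂ * (L k : ℝ) + rv k * E') h]
    exact prod_le_prod_of_subset_of_one_le (by simpa using ⟨h1, h2⟩)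
      (fun k hk => zero_le_one.trans (hd k (by simp_all))) fun k hk _ => hd k hk

/-- Lemma (output difference between a sparse RNN `β' = (w, v)` with `nnz(w^h) ≤ r_{w_h}`,
`nnz(v^h) ≤ r_{v_h}` and entries bounded by `E' ≥ 1`, and an arbitrary RNN `β̃ = (w', v')`
with `|β'_j - β̃_j| ≤ δ₂` for every index `j`): for every `t ≥ 1`,
`∑_j |O_t(β')(j) - O_t(β̃)(j)| ≤ t^H δ₂ (p L₁ + Σ_{k=1}^H L_k)
  (∏_{k=1}^H [δ₂ L_k + r_{w_k} E']) (∏_{k=1}^{H-1} [δ₂ L_k + r_{v_k} E'])^{t-1}`. -/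
theorem output_diff_bound_dense_perturbation
    (H : ℕ) (hH : 2 ≤ H)
    (L : ℕ → ℕ) (hL : ∀ h ≤ H, 1 ≤ L h)
    (w w' : (h : ℕ) → Matrix (Fin (L h)) (Fin (L (h - 1))) ℝ)
    (v v' : (h : ℕ) → Matrix (Fin (L h)) (Fin (L h)) ℝ)
    (ψ : ℕ → ℝ → ℝ)
    (hψ : ∀ h, 1 ≤ h → h ≤ H - 1 → LipschitzWith 1 (ψ h) ∧ ψ h 0 = 0)
    (x : ℕ → Fin (L 0) → ℝ) (hx : ∀ s j, |x s j| ≤ 1)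
    (E' : ℝ) (hE' : 1 ≤ E')
    (rw rv : ℕ → ℕ)
    (hrw : ∀ h, 1 ≤ h → h ≤ H → 1 ≤ rw h) (hrv : ∀ h, 1 ≤ h → h ≤ H - 1 → 1 ≤ rv h)
    (hwE : ∀ h, 1 ≤ h → h ≤ H → ∀ j k, |w h j k| ≤ E')
    (hvE : ∀ h, 1 ≤ h → h ≤ H - 1 → ∀ j k, |v h j k| ≤ E')
    (hwr : ∀ h, 1 ≤ h → h ≤ H → nnz (w h) ≤ rw h)
    (hvr : ∀ h, 1 ≤ h → h ≤ H - 1 → nnz (v h) ≤ rv h)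
    (δ₂ : ℝ) (hδ₂ : 0 ≤ δ₂)
    (hwclose : ∀ h, 1 ≤ h → h ≤ H → ∀ j k, |w h j k - w' h j k| ≤ δ₂)
    (hvclose : ∀ h, 1 ≤ h → h ≤ H - 1 → ∀ j k, |v h j k - v' h j k| ≤ δ₂)
    (t : ℕ) (ht : 1 ≤ t) :
    ∑ j, |output L H w v ψ x t j - output L H w' v' ψ x t j| ≤
      (t : ℝ) ^ H * δ₂ * ((L 0 : ℝ) * (L 1 : ℝ) + ∑ k ∈ Finset.Icc 1 H, (L k : ℝ))
        * (∏ k ∈ Finset.Icc 1 H, (δ₂ * (L k : ℝ) + (rw k : ℝ) * E'))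
        * (∏ k ∈ Finset.Icc 1 (H - 1), (δ₂ * (L k : ℝ) + (rv k : ℝ) * E')) ^ (t - 1) :=
  output_diff_bound_dense_perturbation_general H hH L w w' v v' ψ hψ x hx E' hE' rw rv hrw hrv hwE
    hvE hwr hvr δ₂ hδ₂ hwclose hvclose t ht
end

section
/- Let H ≥ 2 be an integer, E ≥ 1 and δ ≥ 0 real numbers, and rw_1, …, rw_{H−1}, rv_1, …, rv_{H−1} real numbers each ≥ 1. Suppose O(t,i) ≥ 0 and D(t,i) ≥ 0 are defined for all integers t ≥ 1 and 1 ≤ i ≤ H−1 and satisfy: O(t,i) ≤ t^i · (Π_{k=1}^{i} rw_k) · (Π_{k=1}^{i} rv_k)^{t−1} · E^{t·i} for all t, i; D(1,i) ≤ i·δ·E^{i−1}·Π_{k=1}^{i} rw_k for all i; D(t,1) ≤ rw_1·δ + rv_1·δ·O(t−1,1) + rv_1·E·D(t−1,1) for all t ≥ 2; and D(t,i) ≤ rw_i·δ·O(t,i−1) + rw_i·E·D(t,i−1) + rv_i·δ·O(t−1,i) + rv_i·E·D(t−1,i) for all t ≥ 2 and 2 ≤ i ≤ H−1. Then D(t,i)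 ≤ t^{i+1} · i · δ · (Π_{k=1}^{i} rw_k) · (Π_{k=1}^{i} rv_k)^{t−1} · E^{(i+1)t−2} for all t ≥ 1 and 1 ≤ i ≤ H−1. -/
/-!
Put `W_i = ∏_{k ≤ i} rw_k`, `V_i = ∏_{k ≤ i} rv_k` and `C = δ W_{j+1} V_{j+1}^t E^{(j+2)(t+1)-2}`.
The bound is proved by induction on `t`, and for fixed `t` by induction on `i = j + 1`.
Since `rw`, `rv` and `E` are at least `1`, each of the four terms of the recurrence for
`D(t+1, j+1)` is at most `C` times `(t+1)^j`, `j (t+1)^{j+1}`, `t^{j+1}` and `(j+1) t^{j+2}`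
respectively; after bounding `t^{j+1} ≤ (t+1)^j t` and `t^{j+2} ≤ (t+1)^{j+1} t`, these
coefficients sum to exactly `(j+1)(t+1)^{j+2}`.
The case `i = 1` is the same step with `O(t,0) = 1` and `D(t,0) = 0`, the values of the two
bounds at `i = 0`.
-/

open Finset

theorem pow_recurrence_coeff_le (t : ℝ) (ht : 0 ≤ t) (j : ℕ) :
    (t + 1) ^ j + j * (t + 1) ^ (j + 1) + t ^ (j + 1) + (j + 1) * t ^ (j + 1 + 1)
      ≤ (j + 1) * (t + 1) ^ (j + 1 + 1) := by
  have h₁ : t ^ (j + 1) ≤ (t + 1) ^ j * t := by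
    rw [pow_succ]; gcongr; linarith
  have h₂ : t ^ (j + 1 + 1) ≤ (t + 1) ^ j * (t + 1) * t := by
    rw [pow_succ, pow_succ]; gcongr <;> linarith
  calc _ ≤ (t + 1) ^ j + j * (t + 1) ^ (j + 1) + (t + 1) ^ j * t
          + (j + 1) * ((t + 1) ^ j * (t + 1) * t) := by gcongr
    _ = _ := by ring

theorem mul_mul_pow_sub_one_le {a b : ℝ} (ha : 1 ≤ a) (hb : 0 ≤ b) {n : ℕ} (hn : 1 ≤ n) :
    b * (a * b) ^ (n - 1) ≤ (a * b) ^ n := by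
  calc b * (a * b) ^ (n - 1) ≤ (a * b) * (a * b) ^ (n - 1) := by gcongr; nlinarith
    _ = (a * b) ^ n := by rw [← pow_succ', Nat.sub_add_cancel hn]

section FourTermRecurrence

variable {W V w v E δ : ℝ} {t j : ℕ}

theorem prev_layer_terms_le {o d : ℝ} (ht : 1 ≤ t) (hW : 0 ≤ W) (hV : 0 ≤ V) (hw : 0 ≤ w)
    (hv : 1 ≤ v) (hE : 1 ≤ E) (hδ : 0 ≤ δ)
    (ho : o ≤ ((t : ℝ) + 1) ^ j * W * V ^ t * E ^ ((t + 1) * j))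
    (hd : d ≤ ((t : ℝ) + 1) ^ (j + 1) * j * δ * W * V ^ t * E ^ ((j + 1) * (t + 1) - 2)) :
    w * δ * o + w * E * d ≤ (((t : ℝ) + 1) ^ j + j * ((t : ℝ) + 1) ^ (j + 1))
      * (δ * (W * w) * (V * v) ^ t * E ^ ((j + 1 + 1) * (t + 1) - 2)) := by
  have hVv : V ≤ V * v := le_mul_of_one_le_right hV hv
  have e₁ : (t + 1) * j ≤ (j + 1 + 1) * (t + 1) - 2 := Nat.le_sub_of_add_le (by nlinarith)
  have e₂ : (j + 1) * (t + 1) - 2 + 1 ≤ (j + 1 + 1) * (t + 1) - 2 := by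
    have : 2 ≤ (j + 1) * (t + 1) := by nlinarith
    have : (j + 1 + 1) * (t + 1) = (j + 1) * (t + 1) + (t + 1) := by ring
    omega
  calc w * δ * o + w * E * d
      ≤ w * δ * (((t : ℝ) + 1) ^ j * W * V ^ t * E ^ ((t + 1) * j))
        + w * E * (((t : ℝ) + 1) ^ (j + 1) * j * δ * W * V ^ t
          * E ^ ((j + 1) * (t + 1) - 2)) := by gcongr
    _ = ((t : ℝ) + 1) ^ j * (δ * (W * w) * V ^ t * E ^ ((t + 1) * j))
        + j * ((t : ℝ) + 1) ^ (j + 1)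
          * (δ * (W * w) * V ^ t * E ^ ((j + 1) * (t + 1) - 2 + 1)) := by ring
    _ ≤ _ := by rw [add_mul _ _ (_ * E ^ _)]; gcongr

theorem prev_time_terms_le {o d : ℝ} (ht : 1 ≤ t) (hW : 0 ≤ W) (hV : 1 ≤ V) (hw : 0 ≤ w)
    (hv : 0 ≤ v) (hE : 1 ≤ E) (hδ : 0 ≤ δ)
    (ho : o ≤ (t : ℝ) ^ (j + 1) * (W * w) * (V * v) ^ (t - 1) * E ^ (t * (j + 1)))
    (hd : d ≤ (t : ℝ) ^ (j + 1 + 1) * ((j : ℝ) + 1) * δ * (W * w) * (V * v) ^ (t - 1)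
      * E ^ ((j + 1 + 1) * t - 2)) :
    v * δ * o + v * E * d ≤ ((t : ℝ) ^ (j + 1) + (j + 1) * (t : ℝ) ^ (j + 1 + 1))
      * (δ * (W * w) * (V * v) ^ t * E ^ ((j + 1 + 1) * (t + 1) - 2)) := by
  have hvVv := mul_mul_pow_sub_one_le hV hv ht
  have e₁ : t * (j + 1) ≤ (j + 1 + 1) * (t + 1) - 2 := Nat.le_sub_of_add_le (by nlinarith)
  have e₂ : (j + 1 + 1) * t - 2 + 1 ≤ (j + 1 + 1) * (t + 1) - 2 := by
    have : 2 ≤ (j + 1 + 1) * t := by nlinarith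
    have : (j + 1 + 1) * (t + 1) = (j + 1 + 1) * t + (j + 1 + 1) := by ring
    omega
  calc v * δ * o + v * E * d
      ≤ v * δ * ((t : ℝ) ^ (j + 1) * (W * w) * (V * v) ^ (t - 1) * E ^ (t * (j + 1)))
        + v * E * ((t : ℝ) ^ (j + 1 + 1) * ((j : ℝ) + 1) * δ * (W * w) * (V * v) ^ (t - 1)
          * E ^ ((j + 1 + 1) * t - 2)) := by gcongr
    _ = (t : ℝ) ^ (j + 1) * (δ * (W * w) * (v * (V * v) ^ (t - 1)) * E ^ (t * (j + 1)))
        + (j + 1) * (t : ℝ) ^ (j + 1 + 1)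
          * (δ * (W * w) * (v * (V * v) ^ (t - 1)) * E ^ ((j + 1 + 1) * t - 2 + 1)) := by ring
    _ ≤ _ := by rw [add_mul _ _ (_ * E ^ _)]; gcongr

end FourTermRecurrence

def oBound (rw rv : ℕ → ℝ) (E : ℝ) (t i : ℕ) : ℝ :=
  (t : ℝ) ^ i * (∏ k ∈ Icc 1 i, rw k) * (∏ k ∈ Icc 1 i, rv k) ^ (t - 1) * E ^ (t * i)

def dBound (rw rv : ℕ → ℝ) (E δ : ℝ) (t i : ℕ) : ℝ :=
  (t : ℝ) ^ (i + 1) * (i : ℝ) * δ * (∏ k ∈ Icc 1 i, rw k) * (∏ k ∈ Icc 1 i, rv k) ^ (t - 1)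
    * E ^ ((i + 1) * t - 2)

@[simp] theorem oBound_zero (rw rv : ℕ → ℝ) (E : ℝ) (t : ℕ) : oBound rw rv E t 0 = 1 := by
  simp [oBound]

@[simp] theorem dBound_zero (rw rv : ℕ → ℝ) (E δ : ℝ) (t : ℕ) : dBound rw rv E δ t 0 = 0 := by
  simp [dBound]

theorem dBound_one (rw rv : ℕ → ℝ) (E δ : ℝ) (i : ℕ) :
    dBound rw rv E δ 1 i = i * δ * E ^ (i - 1) * ∏ k ∈ Icc 1 i, rw k := by
  rw [dBound, show (i + 1) * 1 - 2 = i - 1 by omega]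
  simp only [Nat.cast_one, one_pow, one_mul, Nat.sub_self, pow_zero, mul_one]
  ring

theorem four_term_le_dBound_succ {rw rv : ℕ → ℝ} {E δ o₁ d₁ o₂ d₂ : ℝ} {t j : ℕ} (ht : 1 ≤ t)
    (hrw : ∀ k ∈ Icc 1 (j + 1), 0 ≤ rw k) (hrv : ∀ k ∈ Icc 1 (j + 1), 1 ≤ rv k)
    (hE : 1 ≤ E) (hδ : 0 ≤ δ)
    (ho₁ : o₁ ≤ oBound rw rv E (t + 1) j) (hd₁ : d₁ ≤ dBound rw rv E δ (t + 1) j)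
    (ho₂ : o₂ ≤ oBound rw rv E t (j + 1)) (hd₂ : d₂ ≤ dBound rw rv E δ t (j + 1)) :
    rw (j + 1) * δ * o₁ + rw (j + 1) * E * d₁ + rv (j + 1) * δ * o₂ + rv (j + 1) * E * d₂
      ≤ dBound rw rv E δ (t + 1) (j + 1) := by
  have hIcc : Icc 1 j ⊆ Icc 1 (j + 1) := Icc_subset_Icc_right j.le_succ
  have hlast : j + 1 ∈ Icc 1 (j + 1) := right_mem_Icc.2 (Nat.le_add_left 1 j)
  have hW : 0 ≤ ∏ k ∈ Icc 1 j, rw k := prod_nonneg fun k hk ↦ hrw k (hIcc hk)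
  have hV : 1 ≤ ∏ k ∈ Icc 1 j, rv k := one_le_prod fun k hk ↦ hrv k (hIcc hk)
  have hw := hrw _ hlast
  have hv := hrv _ hlast
  simp only [oBound, dBound, Nat.add_sub_cancel, prod_Icc_succ_top (Nat.le_add_left 1 j)]
    at ho₁ hd₁ ho₂ hd₂ ⊢
  push_cast at ho₁ hd₁ hd₂ ⊢
  have hlayer := prev_layer_terms_le (v := rv (j + 1)) ht hW (by linarith) hw hv hE hδ ho₁ hd₁
  have htime := prev_time_terms_le ht hW hV hw (by linarith) hE hδ ho₂ hd₂
  have hcoeff := pow_recurrence_coeff_le (t : ℝ) t.cast_nonneg j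
  have hC : 0 ≤ δ * ((∏ k ∈ Icc 1 j, rw k) * rw (j + 1))
      * ((∏ k ∈ Icc 1 j, rv k) * rv (j + 1)) ^ t * E ^ ((j + 1 + 1) * (t + 1) - 2) := by
    positivity
  linarith [mul_le_mul_of_nonneg_right hcoeff hC]

theorem recurrence_diff_bound_general
    (H : ℕ) (E : ℝ) (hE : 1 ≤ E) (δ : ℝ) (hδ : 0 ≤ δ)
    (rw rv : ℕ → ℝ)
    (hrw : ∀ k, 1 ≤ k → k ≤ H - 1 → 1 ≤ rw k)
    (hrv : ∀ k, 1 ≤ k → k ≤ H - 1 → 1 ≤ rv k)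
    (O D : ℕ → ℕ → ℝ)
    (hObd : ∀ t i, 1 ≤ t → 1 ≤ i → i ≤ H - 1 →
      O t i ≤ (t : ℝ) ^ i * (∏ k ∈ Finset.Icc 1 i, rw k)
        * (∏ k ∈ Finset.Icc 1 i, rv k) ^ (t - 1) * E ^ (t * i))
    (h1 : ∀ i, 1 ≤ i → i ≤ H - 1 →
      D 1 i ≤ (i : ℝ) * δ * E ^ (i - 1) * ∏ k ∈ Finset.Icc 1 i, rw k)
    (h2 : ∀ t, 2 ≤ t →
      D t 1 ≤ rw 1 * δ + rv 1 * δ * O (t - 1) 1 + rv 1 * E * D (t - 1) 1)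
    (h3 : ∀ t i, 2 ≤ t → 2 ≤ i → i ≤ H - 1 →
      D t i ≤ rw i * δ * O t (i - 1) + rw i * E * D t (i - 1)
        + rv i * δ * O (t - 1) i + rv i * E * D (t - 1) i) :
    ∀ t i, 1 ≤ t → 1 ≤ i → i ≤ H - 1 →
      D t i ≤ (t : ℝ) ^ (i + 1) * (i : ℝ) * δ * (∏ k ∈ Finset.Icc 1 i, rw k)
        * (∏ k ∈ Finset.Icc 1 i, rv k) ^ (t - 1) * E ^ ((i + 1) * t - 2) := by
  replace hObd : ∀ t i, 1 ≤ t → 1 ≤ i → i ≤ H - 1 → O t i ≤ oBound rw rv E t i := hObd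
  show ∀ t i, 1 ≤ t → 1 ≤ i → i ≤ H - 1 → D t i ≤ dBound rw rv E δ t i
  have hrw₀ {i} (hi : i ≤ H - 1) : ∀ k ∈ Icc 1 i, 0 ≤ rw k := fun k hk ↦
    zero_le_one.trans (hrw k (mem_Icc.1 hk).1 ((mem_Icc.1 hk).2.trans hi))
  have hrv₁ {i} (hi : i ≤ H - 1) : ∀ k ∈ Icc 1 i, 1 ≤ rv k := fun k hk ↦
    hrv k (mem_Icc.1 hk).1 ((mem_Icc.1 hk).2.trans hi)
  intro t i ht
  induction t, ht using Nat.le_induction generalizing i with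
  | base => exact fun hi₁ hi ↦ (h1 i hi₁ hi).trans_eq (dBound_one rw rv E δ i).symm
  | succ t ht ih =>
    intro hi₁
    induction i, hi₁ using Nat.le_induction with
    | base =>
      intro hi
      have hrec : D (t + 1) 1 ≤ rw 1 * δ * oBound rw rv E (t + 1) 0
          + rw 1 * E * dBound rw rv E δ (t + 1) 0 + rv 1 * δ * O t 1 + rv 1 * E * D t 1 := by
        simpa using h2 (t + 1) (by omega)
      exact hrec.trans (four_term_le_dBound_succ ht (hrw₀ hi) (hrv₁ hi) hE hδ le_rfl le_rfl
        (hObd t 1 ht le_rfl hi) (ih 1 le_rfl hi))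
    | succ i hi₁ ihi =>
      intro hi
      obtain ⟨j, rfl⟩ : ∃ j, i = j + 1 := ⟨i - 1, by omega⟩
      have hrec := h3 (t + 1) (j + 1 + 1) (by omega) (by omega) hi
      simp only [Nat.add_sub_cancel] at hrec
      exact hrec.trans (four_term_le_dBound_succ ht (hrw₀ hi) (hrv₁ hi) hE hδ
        (hObd _ _ (by omega) hi₁ (by omega)) (ihi (by omega)) (hObd t _ ht (by omega) hi)
        (ih _ (by omega) hi))

/-- If the nonnegative families `O(t,i)` and `D(t,i)` (for `t ≥ 1`, `1 ≤ i ≤ H-1`) satisfy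
`O(t,i) ≤ t^i (∏_{k=1}^i rw_k) (∏_{k=1}^i rv_k)^{t-1} E^{t i}`,
`D(1,i) ≤ i δ E^{i-1} ∏_{k=1}^i rw_k`,
`D(t,1) ≤ rw_1 δ + rv_1 δ O(t-1,1) + rv_1 E D(t-1,1)` for `t ≥ 2`, and
`D(t,i) ≤ rw_i δ O(t,i-1) + rw_i E D(t,i-1) + rv_i δ O(t-1,i) + rv_i E D(t-1,i)` for
`t ≥ 2`, `2 ≤ i ≤ H-1`, then
`D(t,i) ≤ t^{i+1} i δ (∏_{k=1}^i rw_k) (∏_{k=1}^i rv_k)^{t-1} E^{(i+1)t-2}` for all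
`t ≥ 1`, `1 ≤ i ≤ H-1`. -/
theorem recurrence_diff_bound
    (H : ℕ) (hH : 2 ≤ H) (E : ℝ) (hE : 1 ≤ E) (δ : ℝ) (hδ : 0 ≤ δ)
    (rw rv : ℕ → ℝ)
    (hrw : ∀ k, 1 ≤ k → k ≤ H - 1 → 1 ≤ rw k)
    (hrv : ∀ k, 1 ≤ k → k ≤ H - 1 → 1 ≤ rv k)
    (O D : ℕ → ℕ → ℝ)
    (hO : ∀ t i, 1 ≤ t → 1 ≤ i → i ≤ H - 1 → 0 ≤ O t i)
    (hD : ∀ t i, 1 ≤ t → 1 ≤ i → i ≤ H - 1 → 0 ≤ D t i)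
    (hObd : ∀ t i, 1 ≤ t → 1 ≤ i → i ≤ H - 1 →
      O t i ≤ (t : ℝ) ^ i * (∏ k ∈ Finset.Icc 1 i, rw k)
        * (∏ k ∈ Finset.Icc 1 i, rv k) ^ (t - 1) * E ^ (t * i))
    (h1 : ∀ i, 1 ≤ i → i ≤ H - 1 →
      D 1 i ≤ (i : ℝ) * δ * E ^ (i - 1) * ∏ k ∈ Finset.Icc 1 i, rw k)
    (h2 : ∀ t, 2 ≤ t →
      D t 1 ≤ rw 1 * δ + rv 1 * δ * O (t - 1) 1 + rv 1 * E * D (t - 1) 1)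
    (h3 : ∀ t i, 2 ≤ t → 2 ≤ i → i ≤ H - 1 →
      D t i ≤ rw i * δ * O t (i - 1) + rw i * E * D t (i - 1)
        + rv i * δ * O (t - 1) i + rv i * E * D (t - 1) i) :
    ∀ t i, 1 ≤ t → 1 ≤ i → i ≤ H - 1 →
      D t i ≤ (t : ℝ) ^ (i + 1) * (i : ℝ) * δ * (∏ k ∈ Finset.Icc 1 i, rw k)
        * (∏ k ∈ Finset.Icc 1 i, rv k) ^ (t - 1) * E ^ ((i + 1) * t - 2) :=
  recurrence_diff_bound_general H E hE δ hδ rw rv hrw hrv O D hObd h1 h2 h3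
end
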